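/- arXiv:2401.16379 — 7 statements merged into one kernel-verified Lean document; each statement's English description precedes it below -/
import Mathlib

section
/- There exists a constant C > 0, depending only on T, ā, λ, α, β and the C²-norms of a, f and K (but not on ε), such that for every ε ∈ (0,1], every solution v ∈ C²([0,T]) of the SPFIDE satisfies max_{ξ∈[0,T]} |v(ξ)| ≤ C. -/
set_option maxHeartbeats 1000000

open Set MeasureTheory intervalIntegral

/-- Maximum principle for `ε w'' + a w'` on `[0,T]`: if `Lw ≤ 0` in the interior
and `w ≥ 0` at both endpoints, then `w ≥ 0` on `[0,T]`. -/
lemma spfide_max_principle (T ε : ℝ) (a w w' w'' : ℝ → ℝ) (hT : 0 < T) (hε : 0 < ε)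
    (ha : ContinuousOn a (Set.Icc 0 T))
    (hw : ∀ ξ ∈ Set.Icc 0 T, HasDerivWithinAt w (w' ξ) (Set.Icc 0 T) ξ)
    (hw' : ∀ ξ ∈ Set.Icc 0 T, HasDerivWithinAt w' (w'' ξ) (Set.Icc 0 T) ξ)
    (hL : ∀ ξ ∈ Set.Ioo 0 T, ε * w'' ξ + a ξ * w' ξ ≤ 0)
    (h0 : 0 ≤ w 0) (hTb : 0 ≤ w T) :
    ∀ ξ ∈ Set.Icc 0 T, 0 ≤ w ξ := by
  have hwcont : ContinuousOn w (Set.Icc 0 T) := fun x hx => (hw x hx).continuousWithinAt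
  have hw'cont : ContinuousOn w' (Set.Icc 0 T) := fun x hx => (hw' x hx).continuousWithinAt
  have hIcc_nhds : ∀ x ∈ Set.Ioo 0 T, Set.Icc 0 T ∈ nhds x := fun x hx =>
    Icc_mem_nhds hx.1 hx.2
  set A : ℝ → ℝ := fun x => ∫ t in (0:ℝ)..x, a t with hAdef
  have hAderiv : ∀ x ∈ Set.Ioo 0 T, HasDerivAt A (a x) x := by
    intro x hx
    refine intervalIntegral.integral_hasDerivAt_right ?_ ?_ ?_
    · apply ContinuousOn.intervalIntegrable
      apply ha.mono
      rw [Set.uIcc_of_le hx.1.le]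
      exact Set.Icc_subset_Icc le_rfl hx.2.le
    · exact (ha.mono Set.Ioo_subset_Icc_self).stronglyMeasurableAtFilter isOpen_Ioo x hx
    · exact ha.continuousAt (hIcc_nhds x hx)
  have hAcont : ContinuousOn A (Set.Icc 0 T) := by
    have h1 : IntegrableOn a (Set.uIcc 0 T) := by
      rw [Set.uIcc_of_le hT.le]
      exact ha.integrableOn_Icc
    have := intervalIntegral.continuousOn_primitive_interval (μ := volume) (f := a)
      (a := 0) (b := T) h1
    rwa [Set.uIcc_of_le hT.le] at this
  set q : ℝ → ℝ := fun x => ε * w' x * Real.exp (A x / ε) with hqdef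
  have hqderiv : ∀ x ∈ Set.Ioo 0 T,
      HasDerivAt q (ε * w'' x * Real.exp (A x / ε)
        + ε * w' x * (Real.exp (A x / ε) * (a x / ε))) x := by
    intro x hx
    have hw'x : HasDerivAt w' (w'' x) x :=
      (hw' x (Set.Ioo_subset_Icc_self hx)).hasDerivAt (hIcc_nhds x hx)
    have hE : HasDerivAt (fun y => Real.exp (A y / ε)) (Real.exp (A x / ε) * (a x / ε)) x :=
      ((hAderiv x hx).div_const ε).exp
    exact (hw'x.const_mul ε).mul hE
  have hq_anti : AntitoneOn q (Set.Icc 0 T) := by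
    apply antitoneOn_of_deriv_nonpos (convex_Icc 0 T)
    · exact ((hw'cont.const_smul ε).mul ((hAcont.div_const ε).rexp))
    · rw [interior_Icc]
      intro x hx
      exact (hqderiv x hx).differentiableAt.differentiableWithinAt
    · rw [interior_Icc]
      intro x hx
      rw [(hqderiv x hx).deriv]
      have h1 : ε * w'' x * Real.exp (A x / ε) + ε * w' x * (Real.exp (A x / ε) * (a x / ε))
          = Real.exp (A x / ε) * (ε * w'' x + a x * w' x) := by
        field_simp
      rw [h1]
      exact mul_nonpos_of_nonneg_of_nonpos (Real.exp_pos _).le (hL x hx)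
  intro ξ hξ
  rcases hξ.1.eq_or_lt with h0ξ | h0ξ
  · rwa [← h0ξ]
  rcases hξ.2.eq_or_lt with hξT | hξT
  · rwa [hξT]
  have hξI : ξ ∈ Set.Ioo 0 T := ⟨h0ξ, hξT⟩
  rcases le_or_gt 0 (q ξ) with hqs | hqs
  · -- w monotone on [0, ξ], so w ξ ≥ w 0 ≥ 0
    have hmono : MonotoneOn w (Set.Icc 0 ξ) := by
      apply monotoneOn_of_deriv_nonneg (convex_Icc 0 ξ)
      · exact hwcont.mono (Set.Icc_subset_Icc le_rfl hξ.2)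
      · rw [interior_Icc]
        intro x hx
        have hx' : x ∈ Set.Ioo 0 T := ⟨hx.1, hx.2.trans hξT⟩
        exact ((hw x (Set.Ioo_subset_Icc_self hx')).hasDerivAt
          (hIcc_nhds x hx')).differentiableAt.differentiableWithinAt
      · rw [interior_Icc]
        intro x hx
        have hx' : x ∈ Set.Ioo 0 T := ⟨hx.1, hx.2.trans hξT⟩
        rw [((hw x (Set.Ioo_subset_Icc_self hx')).hasDerivAt (hIcc_nhds x hx')).deriv]
        have hqx : q ξ ≤ q x :=
          hq_anti (Set.Ioo_subset_Icc_self hx') (Set.Ioo_subset_Icc_self hξI) hx.2.le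
        have hq0 : 0 ≤ ε * w' x * Real.exp (A x / ε) := le_trans hqs hqx
        by_contra hneg
        push_neg at hneg
        have hlt : ε * w' x * Real.exp (A x / ε) < 0 :=
          mul_neg_of_neg_of_pos (mul_neg_of_pos_of_neg hε hneg) (Real.exp_pos _)
        linarith
    have := hmono (Set.left_mem_Icc.2 hξ.1) (Set.right_mem_Icc.2 hξ.1) hξ.1
    linarith
  · -- w antitone on [ξ, T], so w ξ ≥ w T ≥ 0
    have hanti : AntitoneOn w (Set.Icc ξ T) := by
      apply antitoneOn_of_deriv_nonpos (convex_Icc ξ T)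
      · exact hwcont.mono (Set.Icc_subset_Icc hξ.1 le_rfl)
      · rw [interior_Icc]
        intro x hx
        have hx' : x ∈ Set.Ioo 0 T := ⟨h0ξ.trans hx.1, hx.2⟩
        exact ((hw x (Set.Ioo_subset_Icc_self hx')).hasDerivAt
          (hIcc_nhds x hx')).differentiableAt.differentiableWithinAt
      · rw [interior_Icc]
        intro x hx
        have hx' : x ∈ Set.Ioo 0 T := ⟨h0ξ.trans hx.1, hx.2⟩
        rw [((hw x (Set.Ioo_subset_Icc_self hx')).hasDerivAt (hIcc_nhds x hx')).deriv]
        have hqx : q x ≤ q ξ :=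
          hq_anti (Set.Ioo_subset_Icc_self hξI) (Set.Ioo_subset_Icc_self hx') hx.1.le
        have hq0 : ε * w' x * Real.exp (A x / ε) < 0 := lt_of_le_of_lt hqx hqs
        by_contra hneg
        push_neg at hneg
        have hlt : 0 < ε * w' x * Real.exp (A x / ε) :=
          mul_pos (mul_pos hε hneg) (Real.exp_pos _)
        linarith
    have := hanti (Set.left_mem_Icc.2 hξ.2) (Set.right_mem_Icc.2 hξ.2) hξ.2
    linarith

/-- ε-uniform bound `‖v‖_∞ ≤ C` for solutions of the singularly
perturbed Fredholm integro-differential equation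
`ε v'' + a v' = f + λ ∫₀ᵀ K(·,η) v(η) dη`, `v 0 = α`, `v T = β`. -/
theorem spfide_sol_bound
    (T abar lam alpha beta : ℝ) (a f : ℝ → ℝ) (K : ℝ → ℝ → ℝ)
    (hT : 0 < T) (habar : 0 < abar)
    (ha : ContDiffOn ℝ 2 a (Set.Icc 0 T))
    (hf : ContDiffOn ℝ 2 f (Set.Icc 0 T))
    (hK : ContDiffOn ℝ 2 (Function.uncurry K) ((Set.Icc 0 T) ×ˢ (Set.Icc 0 T)))
    (hage : ∀ ξ ∈ Set.Icc 0 T, abar ≤ a ξ)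
    (hlam : |lam| < abar /
      (sSup ((fun ξ => ∫ η in (0:ℝ)..T, |K ξ η|) '' Set.Icc 0 T) * T)) :
    ∃ C : ℝ, 0 < C ∧ ∀ ε : ℝ, 0 < ε → ε ≤ 1 →
      ∀ v v' v'' : ℝ → ℝ,
        (∀ ξ ∈ Set.Icc 0 T, HasDerivWithinAt v (v' ξ) (Set.Icc 0 T) ξ) →
        (∀ ξ ∈ Set.Icc 0 T, HasDerivWithinAt v' (v'' ξ) (Set.Icc 0 T) ξ) →
        ContinuousOn v'' (Set.Icc 0 T) →
        (∀ ξ ∈ Set.Ioo 0 T,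
          ε * v'' ξ + a ξ * v' ξ = f ξ + lam * ∫ η in (0:ℝ)..T, K ξ η * v η) →
        v 0 = alpha → v T = beta →
        ∀ ξ ∈ Set.Icc 0 T, |v ξ| ≤ C := by
  have h0mem : (0:ℝ) ∈ Set.Icc 0 T := Set.left_mem_Icc.2 hT.le
  have hac : ContinuousOn a (Set.Icc 0 T) := ha.continuousOn
  have hfc : ContinuousOn f (Set.Icc 0 T) := hf.continuousOn
  have hKc : ContinuousOn (Function.uncurry K) (Set.Icc 0 T ×ˢ Set.Icc 0 T) := hK.continuousOn
  -- max of |f|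
  obtain ⟨xf, hxf, hxfmax⟩ := isCompact_Icc.exists_isMaxOn (⟨0, h0mem⟩ : (Set.Icc 0 T).Nonempty)
    hfc.abs
  set F := |f xf| with hFdef
  have hF0 : 0 ≤ F := abs_nonneg _
  have hFb : ∀ x ∈ Set.Icc 0 T, |f x| ≤ F := fun x hx => hxfmax hx
  -- max of |K| on the square
  obtain ⟨p, hp, hpmax⟩ := (isCompact_Icc.prod isCompact_Icc).exists_isMaxOn
    (⟨(0, 0), ⟨h0mem, h0mem⟩⟩ : (Set.Icc 0 T ×ˢ Set.Icc (0:ℝ) T).Nonempty) hKc.abs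
  set Kmax := |Function.uncurry K p| with hKmaxdef
  have hKmaxb : ∀ x ∈ Set.Icc 0 T, ∀ y ∈ Set.Icc 0 T, |K x y| ≤ Kmax := by
    intro x hx y hy
    exact hpmax (Set.mk_mem_prod hx hy)
  -- continuity of slices of K
  have hKslice : ∀ x ∈ Set.Icc 0 T, ContinuousOn (fun η => K x η) (Set.Icc 0 T) := by
    intro x hx
    have : ContinuousOn ((Function.uncurry K) ∘ (fun η => (x, η))) (Set.Icc 0 T) :=
      hKc.comp ((continuous_const.prodMk continuous_id).continuousOn)
        (fun η hη => Set.mk_mem_prod hx hη)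
    exact this
  set Kbar := sSup ((fun ξ => ∫ η in (0:ℝ)..T, |K ξ η|) '' Set.Icc 0 T) with hKbardef
  have hKint : ∀ x ∈ Set.Icc 0 T, IntervalIntegrable (fun η => |K x η|) volume 0 T := by
    intro x hx
    apply ContinuousOn.intervalIntegrable
    rw [Set.uIcc_of_le hT.le]
    exact (hKslice x hx).abs
  have hbdd : BddAbove ((fun ξ => ∫ η in (0:ℝ)..T, |K ξ η|) '' Set.Icc 0 T) := by
    refine ⟨T * Kmax, ?_⟩
    rintro _ ⟨x, hx, rfl⟩
    calc ∫ η in (0:ℝ)..T, |K x η|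
        ≤ ∫ η in (0:ℝ)..T, Kmax := by
          apply intervalIntegral.integral_mono_on hT.le (hKint x hx) intervalIntegrable_const
          intro y hy
          exact hKmaxb x hx y hy
      _ = T * Kmax := by simp
  have hKbar_le : ∀ x ∈ Set.Icc 0 T, (∫ η in (0:ℝ)..T, |K x η|) ≤ Kbar :=
    fun x hx => le_csSup hbdd ⟨x, hx, rfl⟩
  have hKbarT : 0 < Kbar * T := by
    by_contra hc
    push_neg at hc
    have : abar / (Kbar * T) ≤ 0 := by
      rcases hc.lt_or_eq with h | h
      · exact (div_neg_of_pos_of_neg habar h).le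
      · rw [h, div_zero]
    have := lt_of_lt_of_le hlam this
    linarith [abs_nonneg lam]
  have hKbar : 0 < Kbar := by nlinarith
  have hc1 : |lam| * (Kbar * T) < abar := (lt_div_iff₀ hKbarT).mp hlam
  set B := max |alpha| |beta| with hBdef
  have hB0 : 0 ≤ B := le_trans (abs_nonneg alpha) (le_max_left _ _)
  have hden : 0 < 1 - |lam| * Kbar * T / abar := by
    rw [sub_pos, div_lt_one habar]
    nlinarith
  set C0 := (B + T * F / abar) / (1 - |lam| * Kbar * T / abar) with hC0def
  have hC00 : 0 ≤ C0 := by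
    apply div_nonneg _ hden.le
    have : 0 ≤ T * F / abar := by positivity
    linarith
  refine ⟨C0 + 1, by linarith, ?_⟩
  intro ε hε hε1 v v' v'' hv hv' hv''c heq hva hvb
  have hvc : ContinuousOn v (Set.Icc 0 T) := fun x hx => (hv x hx).continuousWithinAt
  -- max of |v|
  obtain ⟨xm, hxm, hxmmax⟩ := isCompact_Icc.exists_isMaxOn (⟨0, h0mem⟩ : (Set.Icc 0 T).Nonempty)
    hvc.abs
  set M := |v xm| with hMdef
  have hM0 : 0 ≤ M := abs_nonneg _
  have hMb : ∀ x ∈ Set.Icc 0 T, |v x| ≤ M := fun x hx => hxmmax hx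
  set G := F + |lam| * (Kbar * M) with hGdef
  have hG0 : 0 ≤ G := by positivity
  have hGa0 : 0 ≤ G / abar := div_nonneg hG0 habar.le
  -- bound on the right-hand side
  have hGb : ∀ ξ ∈ Set.Ioo 0 T,
      |f ξ + lam * ∫ η in (0:ℝ)..T, K ξ η * v η| ≤ G := by
    intro ξ hξ
    have hξ' : ξ ∈ Set.Icc 0 T := Set.Ioo_subset_Icc_self hξ
    have hint1 : IntervalIntegrable (fun η => |K ξ η * v η|) volume 0 T := by
      apply ContinuousOn.intervalIntegrable
      rw [Set.uIcc_of_le hT.le]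
      exact ((hKslice ξ hξ').mul hvc).abs
    have hint2 : IntervalIntegrable (fun η => |K ξ η| * M) volume 0 T := by
      apply ContinuousOn.intervalIntegrable
      rw [Set.uIcc_of_le hT.le]
      exact (hKslice ξ hξ').abs.mul continuousOn_const
    have hI : |∫ η in (0:ℝ)..T, K ξ η * v η| ≤ Kbar * M := by
      calc |∫ η in (0:ℝ)..T, K ξ η * v η|
          ≤ ∫ η in (0:ℝ)..T, |K ξ η * v η| :=
            intervalIntegral.abs_integral_le_integral_abs hT.le
        _ ≤ ∫ η in (0:ℝ)..T, |K ξ η| * M := by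
            apply intervalIntegral.integral_mono_on hT.le hint1 hint2
            intro y hy
            rw [abs_mul]
            exact mul_le_mul_of_nonneg_left (hMb y hy) (abs_nonneg _)
        _ = (∫ η in (0:ℝ)..T, |K ξ η|) * M := by
            rw [intervalIntegral.integral_mul_const]
        _ ≤ Kbar * M := mul_le_mul_of_nonneg_right (hKbar_le ξ hξ') hM0
    calc |f ξ + lam * ∫ η in (0:ℝ)..T, K ξ η * v η|
        ≤ |f ξ| + |lam| * |∫ η in (0:ℝ)..T, K ξ η * v η| := by
          rw [← abs_mul]; exact abs_add_le _ _
      _ ≤ F + |lam| * (Kbar * M) :=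
          add_le_add (hFb ξ hξ') (mul_le_mul_of_nonneg_left hI (abs_nonneg _))
  -- barrier function derivative
  have hψderiv : ∀ ξ : ℝ,
      HasDerivAt (fun x => B + (T - x) * (G / abar)) (-(G / abar)) ξ := by
    intro ξ
    have h1 : HasDerivAt (fun x : ℝ => (T - x) * (G / abar)) (-1 * (G / abar)) ξ :=
      ((hasDerivAt_id ξ).const_sub T).mul_const (G / abar)
    have h2 := h1.const_add B
    simpa using h2
  have habarne : abar ≠ 0 := ne_of_gt habar
  have hGa : ∀ ξ ∈ Set.Ioo 0 T, G ≤ a ξ * (G / abar) := by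
    intro ξ hξ
    have h1 : abar ≤ a ξ := hage ξ (Set.Ioo_subset_Icc_self hξ)
    have h2 : abar * (G / abar) = G := by field_simp
    nlinarith [div_nonneg hG0 habar.le]
  -- apply the maximum principle to the two barriers
  have hplus : ∀ ξ ∈ Set.Icc 0 T, 0 ≤ B + (T - ξ) * (G / abar) + v ξ := by
    apply spfide_max_principle T ε a _ (fun ξ => -(G / abar) + v' ξ) v'' hT hε hac
    · intro ξ hξ
      exact ((hψderiv ξ).hasDerivWithinAt).add (hv ξ hξ)
    · intro ξ hξ
      exact (hv' ξ hξ).const_add (-(G / abar))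
    · intro ξ hξ
      have h1 := heq ξ hξ
      have h2 := hGb ξ hξ
      have h3 := hGa ξ hξ
      have h4 : f ξ + lam * (∫ η in (0:ℝ)..T, K ξ η * v η) ≤ G :=
        le_trans (le_abs_self _) h2
      nlinarith
    · have h5 : 0 ≤ (T - 0) * (G / abar) := mul_nonneg (by linarith) hGa0
      have hba : -|alpha| ≤ alpha := neg_abs_le alpha
      have h6 := le_max_left |alpha| |beta|
      rw [hva]
      linarith
    · have hbb : -|beta| ≤ beta := neg_abs_le beta
      have := le_max_right |alpha| |beta|
      rw [hvb]
      have : (T - T) * (G / abar) = 0 := by ring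
      linarith [le_max_right |alpha| |beta|, neg_abs_le beta]
  have hminus : ∀ ξ ∈ Set.Icc 0 T, 0 ≤ B + (T - ξ) * (G / abar) - v ξ := by
    apply spfide_max_principle T ε a _ (fun ξ => -(G / abar) - v' ξ) (fun ξ => -(v'' ξ))
      hT hε hac
    · intro ξ hξ
      exact ((hψderiv ξ).hasDerivWithinAt).sub (hv ξ hξ)
    · intro ξ hξ
      exact (hv' ξ hξ).const_sub (-(G / abar))
    · intro ξ hξ
      have h1 := heq ξ hξ
      have h2 := hGb ξ hξ
      have h3 := hGa ξ hξ
      have h4 : -G ≤ f ξ + lam * (∫ η in (0:ℝ)..T, K ξ η * v η) :=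
        (abs_le.mp h2).1
      nlinarith
    · have h5 : 0 ≤ (T - 0) * (G / abar) := mul_nonneg (by linarith) hGa0
      rw [hva]
      linarith [le_max_left |alpha| |beta|, le_abs_self alpha]
    · rw [hvb]
      have : (T - T) * (G / abar) = 0 := by ring
      linarith [le_max_right |alpha| |beta|, le_abs_self beta]
  -- pointwise bound
  have hpt : ∀ ξ ∈ Set.Icc 0 T, |v ξ| ≤ B + T * (G / abar) := by
    intro ξ hξ
    have h1 := hplus ξ hξ
    have h2 := hminus ξ hξ
    have h3 : (T - ξ) * (G / abar) ≤ T * (G / abar) := by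
      apply mul_le_mul_of_nonneg_right _ hGa0
      linarith [hξ.1]
    rw [abs_le]
    constructor <;> linarith
  -- fixed-point argument
  have hMC : M ≤ C0 := by
    have h1 : M ≤ B + T * (G / abar) := hpt xm hxm
    rw [hGdef] at h1
    rw [hC0def, le_div_iff₀ hden]
    have h2 : T * ((F + |lam| * (Kbar * M)) / abar)
        = T * F / abar + |lam| * Kbar * T / abar * M := by
      field_simp
    rw [h2] at h1
    nlinarith [h1, hM0]
  intro ξ hξ
  have := hpt ξ hξ
  have hle : |v ξ| ≤ M := hMb ξ hξ
  linarith
end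

section
/- There exists a constant C > 0, depending only on T, ā, λ, α, β and the C²-norms of a, f and K (but not on ε), such that for every ε ∈ (0,1], every solution v ∈ C²([0,T]) of the SPFIDE satisfies |v'(ξ)| ≤ C (1 + ε⁻¹ e^{−ā ξ/ε}) for all ξ ∈ [0,T]. -/
/-!
Write `L w = ε w'' + a w'`, so that the equation reads `L v = f + λ 𝒦 v` with `|𝒦 v| ≤ K̄ ‖v‖∞`.
The minimum principle for `L`, applied with the linear barriers `max |α| |β| + C (T - ξ) ± v`,
gives `‖v‖∞ ≤ max |α| |β| + (‖f‖∞ + |λ| K̄ ‖v‖∞) T / ā`; since `|λ| K̄ T < ā` this bounds `‖v‖∞`,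
and hence `‖L v‖∞ ≤ M`, independently of `ε`.
Integrating `L v = (ε v' + a v)' - a' v` from `0` to a mean-value point of `v` on `[0, T]` gives
`ε |v'(0)| = O(1)`. Finally `u = v'` solves the first-order equation `ε u' + a u = L v`, and
comparing `u e^{A/ε}` (with `A' = a`) with `(M / ā) e^{A/ε}` yields
`|v'(ξ)| ≤ |v'(0)| e^{-ā ξ/ε} + M / ā`.
-/

open Set Filter Topology Real MeasureTheory
open scoped Interval

theorem IsLocalMin.nonneg_of_hasDerivAt_of_hasDerivAt {w w' : ℝ → ℝ} {x w'' : ℝ}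
    (hmin : IsLocalMin w x) (hw : ∀ᶠ y in 𝓝 x, HasDerivAt w (w' y) y)
    (hw' : HasDerivAt w' w'' x) : 0 ≤ w'' := by
  -- if `w'' < 0`, the second derivative test makes `x` a local maximum as well, so `w` is locally
  -- constant and `w'' = 0`
  by_contra! hneg
  have hderiv : deriv w =ᶠ[𝓝 x] w' := hw.mono fun y hy => hy.deriv
  have hmax : IsLocalMax w x :=
    isLocalMax_of_deriv_deriv_neg (by rwa [hderiv.deriv_eq, hw'.deriv])
      (hderiv.eq_of_nhds.trans (hmin.hasDerivAt_eq_zero hw.self_of_nhds))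
      hw.self_of_nhds.continuousAt
  have hconst : w =ᶠ[𝓝 x] fun _ => w x :=
    (hmin.and hmax).mono fun y hy => le_antisymm hy.2 hy.1
  have hzero : deriv (deriv w) x = 0 := by
    rw [hconst.deriv.deriv_eq]; simp
  rw [hderiv.deriv_eq, hw'.deriv] at hzero
  exact hneg.ne hzero

theorem abs_sub_le_sub_of_abs_deriv_le {f f' g g' : ℝ → ℝ} {x y : ℝ} (hxy : x ≤ y)
    (hf : ContinuousOn f (Icc x y)) (hf' : ∀ t ∈ Ioo x y, HasDerivAt f (f' t) t)
    (hg : ContinuousOn g (Icc x y)) (hg' : ∀ t ∈ Ioo x y, HasDerivAt g (g' t) t)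
    (hfg : ∀ t ∈ Ioo x y, |f' t| ≤ g' t) :
    |f y - f x| ≤ g y - g x := by
  have hx : x ∈ Icc x y := left_mem_Icc.2 hxy
  have hy : y ∈ Icc x y := right_mem_Icc.2 hxy
  have hsub := monotoneOn_of_hasDerivWithinAt_nonneg (convex_Icc x y) (hg.sub hf)
    (f' := fun t => g' t - f' t)
    (by rw [interior_Icc]; exact fun t ht => ((hg' t ht).sub (hf' t ht)).hasDerivWithinAt)
    (by rw [interior_Icc]; exact fun t ht => sub_nonneg.2 ((le_abs_self _).trans (hfg t ht)))
    hx hy hxy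
  have hadd := monotoneOn_of_hasDerivWithinAt_nonneg (convex_Icc x y) (hg.add hf)
    (f' := fun t => g' t + f' t)
    (by rw [interior_Icc]; exact fun t ht => ((hg' t ht).add (hf' t ht)).hasDerivWithinAt)
    (by rw [interior_Icc]; exact fun t ht => by linarith [neg_le_abs (f' t), hfg t ht])
    hx hy hxy
  simp only [Pi.sub_apply, Pi.add_apply] at hsub hadd
  exact abs_le.2 ⟨by linarith, by linarith⟩

theorem ContinuousOn.exists_primitive_Icc {c : ℝ → ℝ} {l r : ℝ} (hlr : l ≤ r)
    (hc : ContinuousOn c (Icc l r)) :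
    ∃ C : ℝ → ℝ, C l = 0 ∧ ContinuousOn C (Icc l r) ∧ ∀ t ∈ Ioo l r, HasDerivAt C (c t) t := by
  have hint : IntegrableOn c (uIcc l r) := by
    rw [uIcc_of_le hlr]; exact hc.integrableOn_Icc
  refine ⟨fun t => ∫ s in l..t, c s, by simp, ?_, fun t ht => ?_⟩
  · simpa only [uIcc_of_le hlr] using intervalIntegral.continuousOn_primitive_interval hint
  · have hct : ContinuousAt c t := hc.continuousAt (Icc_mem_nhds ht.1 ht.2)
    exact intervalIntegral.integral_hasDerivAt_right
      ((hc.mono (Icc_subset_Icc_right ht.2.le)).intervalIntegrable_of_Icc ht.1.le)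
      ((hc.mono Ioo_subset_Icc_self).stronglyMeasurableAtFilter isOpen_Ioo t ht) hct

theorem ContDiffOn.exists_continuousOn_hasDerivAt {c : ℝ → ℝ} {l r : ℝ} (hlr : l < r)
    (hc : ContDiffOn ℝ 1 c (Icc l r)) :
    ∃ c' : ℝ → ℝ, ContinuousOn c' (Icc l r) ∧ ∀ t ∈ Ioo l r, HasDerivAt c (c' t) t :=
  ⟨derivWithin c (Icc l r), hc.continuousOn_derivWithin (uniqueDiffOn_Icc hlr) le_rfl,
    fun t ht => ((hc.differentiableOn one_ne_zero) t (Ioo_subset_Icc_self ht)).hasDerivWithinAt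
      |>.hasDerivAt (Icc_mem_nhds ht.1 ht.2)⟩

theorem continuousOn_and_hasDerivAt_of_hasDerivWithinAt_Icc {f f' : ℝ → ℝ} {l r : ℝ}
    (hf : ∀ t ∈ Icc l r, HasDerivWithinAt f (f' t) (Icc l r) t) :
    ContinuousOn f (Icc l r) ∧ ∀ t ∈ Ioo l r, HasDerivAt f (f' t) t :=
  ⟨fun t ht => (hf t ht).continuousWithinAt,
    fun t ht => (hf t (Ioo_subset_Icc_self ht)).hasDerivAt (Icc_mem_nhds ht.1 ht.2)⟩

theorem IsCompact.exists_nonneg_bound_of_continuousOn {α : Type*} [TopologicalSpace α]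
    {s : Set α} {f : α → ℝ} (hs : IsCompact s) (hf : ContinuousOn f s) :
    ∃ C, 0 ≤ C ∧ ∀ x ∈ s, |f x| ≤ C :=
  let ⟨C, hC⟩ := hs.exists_bound_of_continuousOn hf
  ⟨max C 0, le_max_right _ _, fun x hx => (hC x hx).trans (le_max_left _ _)⟩

theorem abs_integral_mul_le_integral_abs_mul {k g : ℝ → ℝ} {x y Mg : ℝ} (hxy : x ≤ y)
    (hk : ContinuousOn k (Icc x y)) (hMg : ∀ t ∈ Icc x y, |g t| ≤ Mg) :
    |∫ t in x..y, k t * g t| ≤ (∫ t in x..y, |k t|) * Mg := by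
  rw [← intervalIntegral.integral_mul_const]
  refine intervalIntegral.norm_integral_le_of_norm_le (f := fun t => k t * g t) hxy
    (ae_of_all _ fun t ht => ?_)
    ((hk.abs.mul continuousOn_const).intervalIntegrable_of_Icc (μ := volume) hxy)
  rw [Real.norm_eq_abs, abs_mul]
  exact mul_le_mul_of_nonneg_left (hMg t (Ioc_subset_Icc_self ht)) (abs_nonneg _)

theorem integral_abs_le_sSup_image {T ξ : ℝ} {K : ℝ → ℝ → ℝ}
    (hK : ContinuousOn (Function.uncurry K) (Icc 0 T ×ˢ Icc 0 T)) (hξ : ξ ∈ Icc 0 T) :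
    ∫ η in (0:ℝ)..T, |K ξ η| ≤ sSup ((fun ξ => ∫ η in (0:ℝ)..T, |K ξ η|) '' Icc 0 T) := by
  obtain ⟨B, hB⟩ := (isCompact_Icc.prod isCompact_Icc).exists_bound_of_continuousOn hK
  refine le_csSup ⟨B * |T - 0|, ?_⟩ (mem_image_of_mem _ hξ)
  rintro _ ⟨x, hx, rfl⟩
  refine (le_abs_self _).trans (intervalIntegral.norm_integral_le_of_norm_le_const
    (f := fun η => |K x η|) fun η hη => ?_)
  rw [uIoc_of_le (hξ.1.trans hξ.2)] at hη
  simpa using hB (x, η) ⟨hx, Ioc_subset_Icc_self hη⟩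

theorem abs_integral_kernel_mul_le {T ξ Mg : ℝ} {K : ℝ → ℝ → ℝ} {g : ℝ → ℝ}
    (hK : ContinuousOn (Function.uncurry K) (Icc 0 T ×ˢ Icc 0 T)) (hξ : ξ ∈ Icc 0 T)
    (hMg : ∀ t ∈ Icc 0 T, |g t| ≤ Mg) :
    |∫ η in (0:ℝ)..T, K ξ η * g η| ≤
      sSup ((fun ξ => ∫ η in (0:ℝ)..T, |K ξ η|) '' Icc 0 T) * Mg := by
  have hT : 0 ≤ T := hξ.1.trans hξ.2
  refine (abs_integral_mul_le_integral_abs_mul hT ?_ hMg).trans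
    (mul_le_mul_of_nonneg_right (integral_abs_le_sSup_image hK hξ)
      ((abs_nonneg _).trans (hMg 0 (left_mem_Icc.2 hT))))
  exact hK.comp (continuousOn_const.prodMk continuousOn_id) fun η hη => ⟨hξ, hη⟩

theorem pos_and_mul_mul_lt_of_lt_div {q k T abar : ℝ} (habar : 0 < abar) (hT : 0 < T)
    (hq : 0 ≤ q) (h : q < abar / (k * T)) : 0 < k ∧ q * k * T < abar := by
  have hkT : 0 < k * T := by
    by_contra! hkT
    exact hq.not_gt (h.trans_le (div_nonpos_of_nonneg_of_nonpos habar.le hkT))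
  exact ⟨pos_of_mul_pos_left hkT hT.le, by rw [mul_assoc]; exact (lt_div_iff₀ hkT).1 h⟩

section SecondOrder

variable {l r T ε abar M : ℝ} {c c' w w' w'' : ℝ → ℝ}

theorem nonneg_of_ode_lt_zero (hε : 0 ≤ ε) (hw : ContinuousOn w (Icc l r))
    (hw' : ∀ t ∈ Ioo l r, HasDerivAt w (w' t) t) (hw'' : ∀ t ∈ Ioo l r, HasDerivAt w' (w'' t) t)
    (hL : ∀ t ∈ Ioo l r, ε * w'' t + c t * w' t < 0) (hl : 0 ≤ w l) (hr : 0 ≤ w r) :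
    ∀ t ∈ Icc l r, 0 ≤ w t := by
  intro t ht
  obtain ⟨x, hx, hmin⟩ := isCompact_Icc.exists_isMinOn ⟨t, ht⟩ hw
  refine le_trans ?_ (hmin ht)
  rcases hx.1.eq_or_lt with rfl | hlx
  · exact hl
  rcases hx.2.eq_or_lt with rfl | hxr
  · exact hr
  have hxI : x ∈ Ioo l r := ⟨hlx, hxr⟩
  have hnhds : ∀ᶠ y in 𝓝 x, y ∈ Ioo l r := Ioo_mem_nhds hlx hxr
  have hlocal : IsLocalMin w x := hmin.isLocalMin (Icc_mem_nhds hlx hxr)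
  have hw'x : w' x = 0 := hlocal.hasDerivAt_eq_zero (hw' x hxI)
  have hw''x : 0 ≤ w'' x :=
    hlocal.nonneg_of_hasDerivAt_of_hasDerivAt (hnhds.mono hw') (hw'' x hxI)
  have hLx := hL x hxI
  rw [hw'x, mul_zero, add_zero] at hLx
  exact absurd hLx (mul_nonneg hε hw''x).not_gt

theorem abs_le_of_ode_barrier (hε : 0 ≤ ε) {ψ ψ' ψ'' : ℝ → ℝ}
    (hw : ContinuousOn w (Icc l r)) (hw' : ∀ t ∈ Ioo l r, HasDerivAt w (w' t) t)
    (hw'' : ∀ t ∈ Ioo l r, HasDerivAt w' (w'' t) t)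
    (hψ : ContinuousOn ψ (Icc l r)) (hψ' : ∀ t ∈ Ioo l r, HasDerivAt ψ (ψ' t) t)
    (hψ'' : ∀ t ∈ Ioo l r, HasDerivAt ψ' (ψ'' t) t)
    (hL : ∀ t ∈ Ioo l r, ε * ψ'' t + c t * ψ' t + |ε * w'' t + c t * w' t| < 0)
    (hl : |w l| ≤ ψ l) (hr : |w r| ≤ ψ r) :
    ∀ t ∈ Icc l r, |w t| ≤ ψ t := by
  have hL_sub : ∀ t ∈ Ioo l r, ε * (ψ'' t - w'' t) + c t * (ψ' t - w' t) < 0 := fun t ht => by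
    linarith [hL t ht, neg_le_abs (ε * w'' t + c t * w' t), mul_sub ε (ψ'' t) (w'' t),
      mul_sub (c t) (ψ' t) (w' t)]
  have hL_add : ∀ t ∈ Ioo l r, ε * (ψ'' t + w'' t) + c t * (ψ' t + w' t) < 0 := fun t ht => by
    linarith [hL t ht, le_abs_self (ε * w'' t + c t * w' t), mul_add ε (ψ'' t) (w'' t),
      mul_add (c t) (ψ' t) (w' t)]
  intro t ht
  have hsub : 0 ≤ ψ t - w t := nonneg_of_ode_lt_zero (w := fun t => ψ t - w t) hε (hψ.sub hw)
    (fun t ht => (hψ' t ht).sub (hw' t ht)) (fun t ht => (hψ'' t ht).sub (hw'' t ht)) hL_sub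
    (by linarith [le_abs_self (w l)]) (by linarith [le_abs_self (w r)]) t ht
  have hadd : 0 ≤ ψ t + w t := nonneg_of_ode_lt_zero (w := fun t => ψ t + w t) hε (hψ.add hw)
    (fun t ht => (hψ' t ht).add (hw' t ht)) (fun t ht => (hψ'' t ht).add (hw'' t ht)) hL_add
    (by linarith [neg_abs_le (w l)]) (by linarith [neg_abs_le (w r)]) t ht
  exact abs_le.mpr ⟨by linarith, by linarith⟩

theorem abs_le_max_add_of_abs_ode_le (hε : 0 ≤ ε) (habar : 0 < abar) (hM : 0 ≤ M)
    (hca : ∀ t ∈ Ioo 0 T, abar ≤ c t) (hw : ContinuousOn w (Icc 0 T))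
    (hw' : ∀ t ∈ Ioo 0 T, HasDerivAt w (w' t) t) (hw'' : ∀ t ∈ Ioo 0 T, HasDerivAt w' (w'' t) t)
    (hL : ∀ t ∈ Ioo 0 T, |ε * w'' t + c t * w' t| ≤ M) :
    ∀ t ∈ Icc 0 T, |w t| ≤ max |w 0| |w T| + M / abar * (T - t) := by
  intro t ht
  set m := max |w 0| |w T|
  have hbarrier : ∀ C, M / abar < C → |w t| ≤ m + C * (T - t) := by
    intro C hC
    have hC0 : 0 < C := (div_nonneg hM habar.le).trans_lt hC
    have hMC : M < abar * C := by rwa [div_lt_iff₀' habar] at hC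
    refine abs_le_of_ode_barrier (c := c) (ψ := fun s => m + C * (T - s)) (ψ' := fun _ => -C)
      (ψ'' := fun _ => 0) hε hw hw' hw'' (by fun_prop) (fun s _ => ?_)
      (fun s _ => hasDerivAt_const s _) (fun s hs => ?_) ?_ ?_ t ht
    · simpa using ((hasDerivAt_id s).const_sub T).const_mul C |>.const_add m
    · nlinarith [hL s hs, hca s hs]
    · nlinarith [le_max_left |w 0| |w T|, ht.1.trans ht.2]
    · simp [m]
  have hlim : Tendsto (fun C => m + C * (T - t)) (𝓝[>] (M / abar))
      (𝓝 (m + M / abar * (T - t))) := by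
    apply Continuous.continuousWithinAt; fun_prop
  exact ge_of_tendsto hlim (eventually_nhdsWithin_of_forall hbarrier)

theorem abs_le_of_abs_ode_le_add_mul_sup {q : ℝ} (hε : 0 ≤ ε) (habar : 0 < abar) (hM : 0 ≤ M)
    (hq : 0 ≤ q) (hqT : q * T < abar)
    (hca : ∀ t ∈ Ioo 0 T, abar ≤ c t) (hw : ContinuousOn w (Icc 0 T))
    (hw' : ∀ t ∈ Ioo 0 T, HasDerivAt w (w' t) t) (hw'' : ∀ t ∈ Ioo 0 T, HasDerivAt w' (w'' t) t)
    (hL : ∀ Mw, (∀ t ∈ Icc 0 T, |w t| ≤ Mw) →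
      ∀ t ∈ Ioo 0 T, |ε * w'' t + c t * w' t| ≤ M + q * Mw) :
    ∀ t ∈ Icc 0 T, |w t| ≤ (abar * max |w 0| |w T| + M * T) / (abar - q * T) := by
  intro t ht
  obtain ⟨x, hx, hmax⟩ := isCompact_Icc.exists_isMaxOn ⟨t, ht⟩ hw.abs
  have hwx := abs_le_max_add_of_abs_ode_le hε habar (by positivity) hca hw hw' hw''
    (hL _ fun s hs => hmax hs) x hx
  simp only at hwx
  have hy : abar * |w x| ≤ abar * max |w 0| |w T| + (M + q * |w x|) * (T - x) := by
    have e : abar * ((M + q * |w x|) / abar * (T - x)) = (M + q * |w x|) * (T - x) := by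
      field_simp
    linarith [mul_le_mul_of_nonneg_left hwx habar.le]
  have hwt : |w t| ≤ |w x| := hmax ht
  rw [le_div_iff₀ (by linarith)]
  nlinarith [mul_le_mul_of_nonneg_right hwt (by linarith : 0 ≤ abar - q * T),
    mul_nonneg (add_nonneg hM (mul_nonneg hq (abs_nonneg (w x)))) hx.1]

theorem abs_le_exp_add_of_abs_ode_le (hε : 0 < ε) (habar : 0 < abar) (hM : 0 ≤ M)
    {u u' : ℝ → ℝ} (hc : ContinuousOn c (Icc 0 T)) (hca : ∀ t ∈ Ioo 0 T, abar ≤ c t)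
    (hu : ContinuousOn u (Icc 0 T)) (hu' : ∀ t ∈ Ioo 0 T, HasDerivAt u (u' t) t)
    (hL : ∀ t ∈ Ioo 0 T, |ε * u' t + c t * u t| ≤ M) :
    ∀ ξ ∈ Icc 0 T, |u ξ| ≤ |u 0| * exp (-(abar * ξ) / ε) + M / abar := by
  intro ξ hξ
  obtain ⟨A, hA0, hAc, hA'⟩ := hc.exists_primitive_Icc (hξ.1.trans hξ.2)
  have hsub : Icc 0 ξ ⊆ Icc 0 T := Icc_subset_Icc_right hξ.2
  have hsub' : Ioo 0 ξ ⊆ Ioo 0 T := Ioo_subset_Ioo_right hξ.2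
  have hAξ : abar * ξ ≤ A ξ := by
    have h := abs_sub_le_sub_of_abs_deriv_le hξ.1 (f := fun t => abar * t) (f' := fun _ => abar)
      (by fun_prop) (fun t _ => by simpa using (hasDerivAt_id t).const_mul abar)
      (hAc.mono hsub) (fun t ht => hA' t (hsub' ht))
      (fun t ht => (abs_of_pos habar).trans_le (hca t (hsub' ht)))
    simp only [mul_zero, sub_zero, hA0] at h
    exact (le_abs_self _).trans h
  -- `exp (A / ε)` is an integrating factor: `(u e^{A/ε})' = (ε u' + c u) / ε * e^{A/ε}`
  set E := fun t => exp (A t / ε) with hE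
  have hE' : ∀ t ∈ Ioo 0 T, HasDerivAt E (c t / ε * E t) t := fun t ht => by
    simpa [hE, mul_comm] using ((hA' t ht).div_const ε).exp
  have huE' : ∀ t ∈ Ioo 0 T,
      HasDerivAt (fun t => u t * E t) ((ε * u' t + c t * u t) / ε * E t) t := fun t ht =>
    ((hu' t ht).mul (hE' t ht)).congr_deriv (by field_simp)
  have hEc : ContinuousOn E (Icc 0 T) := (hAc.div_const ε).rexp
  have key := abs_sub_le_sub_of_abs_deriv_le hξ.1 (f := fun t => u t * E t)
    (g := fun t => M / abar * E t) ((hu.mul hEc).mono hsub) (fun t ht => huE' t (hsub' ht))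
    ((continuousOn_const.mul hEc).mono hsub) (fun t ht => (hE' t (hsub' ht)).const_mul _)
    (fun t ht => by
      have hEt : 0 < E t := exp_pos _
      rw [abs_mul, abs_div, abs_of_pos hε, abs_of_pos hEt]
      calc |ε * u' t + c t * u t| / ε * E t ≤ M / ε * E t := by gcongr; exact hL t (hsub' ht)
        _ = M / abar * (abar / ε * E t) := by field_simp
        _ ≤ M / abar * (c t / ε * E t) := by gcongr; exact hca t (hsub' ht))
  have hE0 : E 0 = 1 := by simp [hE, hA0]
  have hEξ : 0 < E ξ := exp_pos _
  simp only [hE0, mul_one] at key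
  have hbound : |u ξ| * E ξ ≤ |u 0| + M / abar * E ξ := by
    have h := abs_sub_abs_le_abs_sub (u ξ * E ξ) (u 0)
    rw [abs_mul, abs_of_pos hEξ] at h
    linarith [div_nonneg hM habar.le]
  have hdecay : (E ξ)⁻¹ ≤ exp (-(abar * ξ) / ε) := by
    rw [hE, ← exp_neg, neg_div]
    gcongr
  calc |u ξ| = |u ξ| * E ξ * (E ξ)⁻¹ := by field_simp
    _ ≤ (|u 0| + M / abar * E ξ) * (E ξ)⁻¹ := by gcongr
    _ = |u 0| * (E ξ)⁻¹ + M / abar := by field_simp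
    _ ≤ |u 0| * exp (-(abar * ξ) / ε) + M / abar := by gcongr

theorem integral_ode_eq_sub {x y : ℝ} (hxy : x ≤ y) (hc : ContinuousOn c (Icc x y))
    (hc' : ContinuousOn c' (Icc x y)) (hdc : ∀ t ∈ Ioo x y, HasDerivAt c (c' t) t)
    (hw : ContinuousOn w (Icc x y)) (hw' : ContinuousOn w' (Icc x y))
    (hw'' : ContinuousOn w'' (Icc x y)) (hdw : ∀ t ∈ Ioo x y, HasDerivAt w (w' t) t)
    (hdw' : ∀ t ∈ Ioo x y, HasDerivAt w' (w'' t) t) :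
    ∫ t in x..y, (ε * w'' t + c t * w' t) =
      ε * w' y + c y * w y - (ε * w' x + c x * w x) - ∫ t in x..y, c' t * w t := by
  have hF : IntervalIntegrable (fun t => ε * w'' t + c t * w' t) volume x y :=
    ContinuousOn.intervalIntegrable_of_Icc hxy (by fun_prop)
  have hG : IntervalIntegrable (fun t => c' t * w t) volume x y :=
    ContinuousOn.intervalIntegrable_of_Icc hxy (by fun_prop)
  have hftc := intervalIntegral.integral_eq_sub_of_hasDeriv_right_of_le hxy
    (f := fun t => ε * w' t + c t * w t) (f' := fun t => ε * w'' t + c t * w' t + c' t * w t)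
    (by fun_prop)
    (fun t ht => (((hdw' t ht).const_mul ε).add ((hdc t ht).mul (hdw t ht))).hasDerivWithinAt
      |>.congr_deriv (by ring))
    (hF.add hG)
  rw [intervalIntegral.integral_add hF hG] at hftc
  linarith

theorem mul_abs_deriv_zero_le {Mc Mc' Mw : ℝ} (hT : 0 < T) (hε : 0 ≤ ε)
    (hc : ContinuousOn c (Icc 0 T)) (hc' : ContinuousOn c' (Icc 0 T))
    (hdc : ∀ t ∈ Ioo 0 T, HasDerivAt c (c' t) t)
    (hw : ContinuousOn w (Icc 0 T)) (hw' : ContinuousOn w' (Icc 0 T))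
    (hw'' : ContinuousOn w'' (Icc 0 T)) (hdw : ∀ t ∈ Ioo 0 T, HasDerivAt w (w' t) t)
    (hdw' : ∀ t ∈ Ioo 0 T, HasDerivAt w' (w'' t) t)
    (hMc : ∀ t ∈ Icc 0 T, |c t| ≤ Mc) (hMc' : ∀ t ∈ Icc 0 T, |c' t| ≤ Mc')
    (hMw : ∀ t ∈ Icc 0 T, |w t| ≤ Mw) (hL : ∀ t ∈ Ioo 0 T, |ε * w'' t + c t * w' t| ≤ M) :
    ε * |w' 0| ≤ ε * |w T - w 0| / T + M * T + (2 * Mc + Mc' * T) * Mw := by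
  obtain ⟨s, hs, hslope⟩ := exists_hasDerivAt_eq_slope w w' hT hw hdw
  have hsT : Icc 0 s ⊆ Icc 0 T := Icc_subset_Icc_right hs.2.le
  have hsT' : Ioo 0 s ⊆ Ioo 0 T := Ioo_subset_Ioo_right hs.2.le
  have hIoc : Ι 0 s ⊆ Ioo 0 T := by
    rw [uIoc_of_le hs.1.le]; exact fun t ht => ⟨ht.1, ht.2.trans_lt hs.2⟩
  have hid := integral_ode_eq_sub (ε := ε) hs.1.le (hc.mono hsT) (hc'.mono hsT)
    (fun t ht => hdc t (hsT' ht)) (hw.mono hsT) (hw'.mono hsT) (hw''.mono hsT)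
    (fun t ht => hdw t (hsT' ht)) (fun t ht => hdw' t (hsT' ht))
  have hM : 0 ≤ M := (abs_nonneg _).trans (hL s hs)
  have hMc'w : 0 ≤ Mc' * Mw :=
    mul_nonneg ((abs_nonneg _).trans (hMc' 0 (left_mem_Icc.2 hT.le)))
      ((abs_nonneg _).trans (hMw 0 (left_mem_Icc.2 hT.le)))
  have hs_le : |s - 0| ≤ T := by rw [sub_zero, abs_of_pos hs.1]; exact hs.2.le
  have hF : |∫ t in (0)..s, (ε * w'' t + c t * w' t)| ≤ M * T :=
    (intervalIntegral.norm_integral_le_of_norm_le_const (f := fun t => ε * w'' t + c t * w' t)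
      fun t ht => hL t (hIoc ht)).trans (by gcongr)
  have hG : |∫ t in (0)..s, c' t * w t| ≤ Mc' * Mw * T := by
    refine (intervalIntegral.norm_integral_le_of_norm_le_const (f := fun t => c' t * w t)
      fun t ht => ?_).trans (by gcongr)
    have ht' := Ioo_subset_Icc_self (hIoc ht)
    rw [Real.norm_eq_abs, abs_mul]
    exact mul_le_mul (hMc' t ht') (hMw t ht') (abs_nonneg _) ((abs_nonneg _).trans (hMc' t ht'))
  have hpoint : ∀ t ∈ Icc 0 T, |c t * w t| ≤ Mc * Mw := fun t ht => by
    rw [abs_mul]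
    exact mul_le_mul (hMc t ht) (hMw t ht) (abs_nonneg _) ((abs_nonneg _).trans (hMc t ht))
  have hws : |ε * w' s| = ε * |w T - w 0| / T := by
    rw [hslope, sub_zero, abs_mul, abs_of_nonneg hε, abs_div, abs_of_pos hT, mul_div_assoc]
  obtain ⟨h1, h1'⟩ := abs_le.1 hF
  obtain ⟨h2, h2'⟩ := abs_le.1 hG
  obtain ⟨h3, h3'⟩ := abs_le.1 (hpoint s (Ioo_subset_Icc_self hs))
  obtain ⟨h4, h4'⟩ := abs_le.1 (hpoint 0 (left_mem_Icc.2 hT.le))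
  obtain ⟨h5, h5'⟩ := abs_le.1 hws.le
  calc ε * |w' 0| = |ε * w' 0| := by rw [abs_mul, abs_of_nonneg hε]
    _ ≤ _ := abs_le.2 ⟨by linarith, by linarith⟩

end SecondOrder

/-- ε-uniform layer bound `|v'(ξ)| ≤ C (1 + ε⁻¹ e^{−ā ξ/ε})` for
solutions of the singularly perturbed Fredholm integro-differential equation. -/
theorem spfide_first_deriv_bound
    (T abar lam alpha beta : ℝ) (a f : ℝ → ℝ) (K : ℝ → ℝ → ℝ)
    (hT : 0 < T) (habar : 0 < abar)
    (ha : ContDiffOn ℝ 2 a (Set.Icc 0 T))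
    (hf : ContDiffOn ℝ 2 f (Set.Icc 0 T))
    (hK : ContDiffOn ℝ 2 (Function.uncurry K) ((Set.Icc 0 T) ×ˢ (Set.Icc 0 T)))
    (hage : ∀ ξ ∈ Set.Icc 0 T, abar ≤ a ξ)
    (hlam : |lam| < abar /
      (sSup ((fun ξ => ∫ η in (0:ℝ)..T, |K ξ η|) '' Set.Icc 0 T) * T)) :
    ∃ C : ℝ, 0 < C ∧ ∀ ε : ℝ, 0 < ε → ε ≤ 1 →
      ∀ v v' v'' : ℝ → ℝ,
        (∀ ξ ∈ Set.Icc 0 T, HasDerivWithinAt v (v' ξ) (Set.Icc 0 T) ξ) →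
        (∀ ξ ∈ Set.Icc 0 T, HasDerivWithinAt v' (v'' ξ) (Set.Icc 0 T) ξ) →
        ContinuousOn v'' (Set.Icc 0 T) →
        (∀ ξ ∈ Set.Ioo 0 T,
          ε * v'' ξ + a ξ * v' ξ = f ξ + lam * ∫ η in (0:ℝ)..T, K ξ η * v η) →
        v 0 = alpha → v T = beta →
        ∀ ξ ∈ Set.Icc 0 T,
          |v' ξ| ≤ C * (1 + ε⁻¹ * Real.exp (-(abar * ξ) / ε)) := by
  obtain ⟨a', ha'c, hda⟩ := (ha.of_le one_le_two).exists_continuousOn_hasDerivAt hT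
  obtain ⟨Ma, hMa0, hMa⟩ := isCompact_Icc.exists_nonneg_bound_of_continuousOn ha.continuousOn
  obtain ⟨Ma', hMa'0, hMa'⟩ := isCompact_Icc.exists_nonneg_bound_of_continuousOn ha'c
  obtain ⟨Mf, hMf0, hMf⟩ := isCompact_Icc.exists_nonneg_bound_of_continuousOn hf.continuousOn
  have hage' : ∀ t ∈ Ioo 0 T, abar ≤ a t := fun t ht => hage t (Ioo_subset_Icc_self ht)
  set Kbar := sSup ((fun ξ => ∫ η in (0:ℝ)..T, |K ξ η|) '' Icc 0 T)
  obtain ⟨hKbar, hqT⟩ := pos_and_mul_mul_lt_of_lt_div habar hT (abs_nonneg lam) hlam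
  set M₀ := (abar * max |alpha| |beta| + Mf * T) / (abar - |lam| * Kbar * T)
  set MF := Mf + |lam| * Kbar * M₀
  set C₀ := |beta - alpha| / T + MF * T + (2 * Ma + Ma' * T) * M₀
  have hM₀ : 0 ≤ M₀ := div_nonneg (by positivity) (by linarith)
  have hMF : 0 ≤ MF := by positivity
  refine ⟨C₀ + MF / abar + 1, by positivity, ?_⟩
  intro ε hε hε1 v v' v'' hv hv' hv''c hode hv0 hvT ξ hξ
  obtain ⟨hvc, hdv⟩ := continuousOn_and_hasDerivAt_of_hasDerivWithinAt_Icc hv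
  obtain ⟨hv'c, hdv'⟩ := continuousOn_and_hasDerivAt_of_hasDerivWithinAt_Icc hv'
  have hrhs : ∀ Mv, (∀ t ∈ Icc 0 T, |v t| ≤ Mv) →
      ∀ t ∈ Ioo 0 T, |ε * v'' t + a t * v' t| ≤ Mf + |lam| * Kbar * Mv := fun Mv hMv t ht => by
    rw [hode t ht, mul_assoc]
    refine (abs_add_le _ _).trans (add_le_add (hMf t (Ioo_subset_Icc_self ht)) ?_)
    rw [abs_mul]
    gcongr
    exact abs_integral_kernel_mul_le hK.continuousOn (Ioo_subset_Icc_self ht) hMv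
  have hvM₀ : ∀ t ∈ Icc 0 T, |v t| ≤ M₀ := by
    simpa only [hv0, hvT] using
      abs_le_of_abs_ode_le_add_mul_sup hε.le habar hMf0 (by positivity) hqT hage' hvc hdv hdv' hrhs
  have hLv := hrhs M₀ hvM₀
  have hv'0 : |v' 0| ≤ C₀ * ε⁻¹ := by
    rw [← div_eq_mul_inv, le_div_iff₀' hε]
    refine (mul_abs_deriv_zero_le hT hε.le ha.continuousOn ha'c hda hvc hv'c hv''c hdv hdv'
      hMa hMa' hvM₀ hLv).trans ?_
    rw [hv0, hvT, mul_div_assoc]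
    linarith [mul_le_of_le_one_left (div_nonneg (abs_nonneg (beta - alpha)) hT.le) hε1]
  have hX : 0 ≤ ε⁻¹ * exp (-(abar * ξ) / ε) := by positivity
  calc |v' ξ| ≤ |v' 0| * exp (-(abar * ξ) / ε) + MF / abar :=
        abs_le_exp_add_of_abs_ode_le hε habar hMF ha.continuousOn hage' hv'c hdv' hLv ξ hξ
    _ ≤ C₀ * (ε⁻¹ * exp (-(abar * ξ) / ε)) + MF / abar := by
        rw [← mul_assoc]; gcongr
    _ ≤ (C₀ + MF / abar + 1) * (1 + ε⁻¹ * exp (-(abar * ξ) / ε)) := by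
        have hC₀0 : 0 ≤ C₀ := by positivity
        nlinarith [mul_nonneg (div_nonneg hMF habar.le) hX]
end

section
/- Let ξ_{i−1} < ξ_i < ξ_{i+1}, a_i > 0, ε > 0, h_i = ξ_i − ξ_{i−1}, h_{i+1} = ξ_{i+1} − ξ_i, ħ_i = (h_i + h_{i+1})/2, and let ψ_i be the exponential basis function. Then for every v ∈ C²([ξ_{i−1}, ξ_{i+1}]), with v_j = v(ξ_j): ħ_i⁻¹ ∫_{ξ_{i−1}}^{ξ_{i+1}} (ε v''(ξ) + a_i v'(ξ)) ψ_i(ξ) dξ = ε v_{ξ̄ξ,i} + a_i (χ_i^{(1)} v_{ξ̄,i} + χ_i^{(2)} v_{ξ,i}), where v_{ξ̄,i} = (v_i − v_{i−1})/h_i, v_{ξ,i} = (v_{i+1} − v_i)/h_{i+1}, v_{ξ̄ξ,i} = (v_{ξ,i} − v_{ξ̄,i})/ħ_i, χ_i^{(1)} = ħ_i⁻¹[ε/a_i − h_i/(e^{a_i h_i/ε} − 1)], and χ_i^{(2)} = ħ_i⁻¹[h_{i+1}/(1 − e^{−a_i h_{i+1}/ε}) − ε/a_i]. -/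
/-!
On each of its two pieces the exponential basis function solves the first-order equation
`ε ψ' = a ψ + c` for a constant `c` (it is in the kernel of the adjoint operator `ε ψ'' - a ψ'`).
For such `ψ` the function `ε v' ψ - c v` is an antiderivative of `(ε v'' + a v') ψ`, so the
integral over each piece is a boundary term. Since `ψ` vanishes at the outer nodes and equals `1`
at `ξ_i`, the `v'(ξ_i)` contributions of the two pieces cancel, and what is left is a combination
of `v_{i-1}, v_i, v_{i+1}` which rearranges into the stated difference quotients.
-/

/-- The exponential basis function `ψ_i` on `[ξ_{i−1}, ξ_{i+1}]`. -/
noncomputable def psiFun (ε ai ξim ξi ξip : ℝ) : ℝ → ℝ := fun ξ =>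
  if ξ ≤ ξi then
    (Real.exp (ai * (ξ - ξim) / ε) - 1) / (Real.exp (ai * (ξi - ξim) / ε) - 1)
  else
    (1 - Real.exp (-(ai * (ξip - ξ)) / ε)) / (1 - Real.exp (-(ai * (ξip - ξi)) / ε))

open Set MeasureTheory

theorem integral_diffusion_convection_mul_eq {ε k c a b : ℝ} {v v' v'' ψ : ℝ → ℝ}
    (hab : a ≤ b) (hε : ε ≠ 0)
    (hv : ∀ x ∈ Icc a b, HasDerivWithinAt v (v' x) (Icc a b) x)
    (hv' : ∀ x ∈ Icc a b, HasDerivWithinAt v' (v'' x) (Icc a b) x)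
    (hv'' : ContinuousOn v'' (Icc a b))
    (hψc : ContinuousOn ψ (Icc a b))
    (hψ : ∀ x ∈ Ioo a b, HasDerivAt ψ ((k * ψ x + c) / ε) x) :
    ∫ x in a..b, (ε * v'' x + k * v' x) * ψ x
      = (ε * v' b * ψ b - c * v b) - (ε * v' a * ψ a - c * v a) := by
  have hvc : ContinuousOn v (Icc a b) := fun x hx => (hv x hx).continuousWithinAt
  have hv'c : ContinuousOn v' (Icc a b) := fun x hx => (hv' x hx).continuousWithinAt
  apply intervalIntegral.integral_eq_sub_of_hasDerivAt_of_le
    (f := fun x => ε * v' x * ψ x - c * v x) hab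
  · exact ((continuousOn_const.mul hv'c).mul hψc).sub (continuousOn_const.mul hvc)
  · intro x hx
    have hnhds : Icc a b ∈ nhds x := Icc_mem_nhds hx.1 hx.2
    have hvx := (hv x (Ioo_subset_Icc_self hx)).hasDerivAt hnhds
    have hv'x := (hv' x (Ioo_subset_Icc_self hx)).hasDerivAt hnhds
    refine (((hv'x.const_mul ε).mul (hψ x hx)).sub (hvx.const_mul c)).congr_deriv ?_
    field_simp
    ring
  · apply ContinuousOn.intervalIntegrable
    rw [uIcc_of_le hab]
    exact ((continuousOn_const.mul hv'').add (continuousOn_const.mul hv'c)).mul hψc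

noncomputable def psiLeft (ε ai ξim ξi : ℝ) : ℝ → ℝ := fun ξ =>
  (Real.exp (ai * (ξ - ξim) / ε) - 1) / (Real.exp (ai * (ξi - ξim) / ε) - 1)

noncomputable def psiRight (ε ai ξi ξip : ℝ) : ℝ → ℝ := fun ξ =>
  (1 - Real.exp (-(ai * (ξip - ξ)) / ε)) / (1 - Real.exp (-(ai * (ξip - ξi)) / ε))

section Pieces

variable (ε ai ξim ξi ξip : ℝ)

theorem psiFun_eq_psiLeft {ξ : ℝ} (h : ξ ≤ ξi) :
    psiFun ε ai ξim ξi ξip ξ = psiLeft ε ai ξim ξi ξ :=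
  if_pos h

theorem psiFun_eq_psiRight {ξ : ℝ} (h : ξi < ξ) :
    psiFun ε ai ξim ξi ξip ξ = psiRight ε ai ξi ξip ξ :=
  if_neg h.not_ge

theorem hasDerivAt_psiLeft (x : ℝ) :
    HasDerivAt (psiLeft ε ai ξim ξi)
      ((ai * psiLeft ε ai ξim ξi x + ai / (Real.exp (ai * (ξi - ξim) / ε) - 1)) / ε) x := by
  have hlin : HasDerivAt (fun ξ => ai * (ξ - ξim) / ε) (ai / ε) x := by
    simpa using (((hasDerivAt_id x).sub_const ξim).const_mul ai).div_const ε
  refine (((hlin.exp).sub_const 1).div_const (Real.exp (ai * (ξi - ξim) / ε) - 1)).congr_deriv ?_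
  simp only [psiLeft]
  ring

theorem hasDerivAt_psiRight (x : ℝ) :
    HasDerivAt (psiRight ε ai ξi ξip)
      ((ai * psiRight ε ai ξi ξip x - ai / (1 - Real.exp (-(ai * (ξip - ξi)) / ε))) / ε) x := by
  have hlin : HasDerivAt (fun ξ => -(ai * (ξip - ξ)) / ε) (ai / ε) x := by
    simpa using ((((hasDerivAt_id x).const_sub ξip).const_mul ai).neg).div_const ε
  refine (((hlin.exp).const_sub 1).div_const (1 - Real.exp (-(ai * (ξip - ξi)) / ε))).congr_deriv ?_
  simp only [psiRight]
  ring

theorem continuous_psiLeft : Continuous (psiLeft ε ai ξim ξi) :=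
  continuous_iff_continuousAt.mpr fun x => (hasDerivAt_psiLeft ε ai ξim ξi x).continuousAt

theorem continuous_psiRight : Continuous (psiRight ε ai ξi ξip) :=
  continuous_iff_continuousAt.mpr fun x => (hasDerivAt_psiRight ε ai ξi ξip x).continuousAt

theorem psiLeft_start : psiLeft ε ai ξim ξi ξim = 0 := by
  simp [psiLeft]

theorem psiRight_end : psiRight ε ai ξi ξip ξip = 0 := by
  simp [psiRight]

variable {ε ai ξim ξi ξip}

theorem psiLeft_node (hε : ε ≠ 0) (hai : ai ≠ 0) (h : ξim ≠ ξi) :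
    psiLeft ε ai ξim ξi ξi = 1 := by
  refine div_self (sub_ne_zero.mpr ?_)
  rw [Ne, Real.exp_eq_one_iff]
  exact div_ne_zero (mul_ne_zero hai (sub_ne_zero.mpr h.symm)) hε

theorem psiRight_node (hε : ε ≠ 0) (hai : ai ≠ 0) (h : ξi ≠ ξip) :
    psiRight ε ai ξi ξip ξi = 1 := by
  refine div_self (sub_ne_zero.mpr ?_)
  rw [ne_comm, Ne, Real.exp_eq_one_iff]
  exact div_ne_zero (neg_ne_zero.mpr (mul_ne_zero hai (sub_ne_zero.mpr h.symm))) hε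

theorem integral_mul_psiFun {f : ℝ → ℝ} (h1 : ξim ≤ ξi) (h2 : ξi ≤ ξip)
    (hf : ContinuousOn f (Icc ξim ξip)) :
    ∫ x in ξim..ξip, f x * psiFun ε ai ξim ξi ξip x
      = (∫ x in ξim..ξi, f x * psiLeft ε ai ξim ξi x)
        + ∫ x in ξi..ξip, f x * psiRight ε ai ξi ξip x := by
  have hL : EqOn (fun x => f x * psiFun ε ai ξim ξi ξip x) (fun x => f x * psiLeft ε ai ξim ξi x)
      (uIoo ξim ξi) := fun x hx => by
    rw [uIoo_of_le h1] at hx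
    simp only [psiFun_eq_psiLeft _ _ _ _ _ hx.2.le]
  have hR : EqOn (fun x => f x * psiFun ε ai ξim ξi ξip x) (fun x => f x * psiRight ε ai ξi ξip x)
      (uIoo ξi ξip) := fun x hx => by
    rw [uIoo_of_le h2] at hx
    simp only [psiFun_eq_psiRight _ _ _ _ _ hx.1]
  have hintL : IntervalIntegrable (fun x => f x * psiLeft ε ai ξim ξi x) volume ξim ξi := by
    refine ContinuousOn.intervalIntegrable ?_
    rw [uIcc_of_le h1]
    exact (hf.mono (Icc_subset_Icc_right h2)).mul (continuous_psiLeft ε ai ξim ξi).continuousOn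
  have hintR : IntervalIntegrable (fun x => f x * psiRight ε ai ξi ξip x) volume ξi ξip := by
    refine ContinuousOn.intervalIntegrable ?_
    rw [uIcc_of_le h2]
    exact (hf.mono (Icc_subset_Icc_left h1)).mul (continuous_psiRight ε ai ξi ξip).continuousOn
  rw [← intervalIntegral.integral_add_adjacent_intervals
    ((intervalIntegrable_congr_uIoo hL).mpr hintL) ((intervalIntegrable_congr_uIoo hR).mpr hintR),
    intervalIntegral.integral_congr_uIoo hL, intervalIntegral.integral_congr_uIoo hR]

variable {v v' v'' : ℝ → ℝ}

theorem integral_diffusion_convection_mul_psiLeft (hε : ε ≠ 0) (hai : ai ≠ 0) (h : ξim < ξi)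
    (hv : ∀ x ∈ Icc ξim ξi, HasDerivWithinAt v (v' x) (Icc ξim ξi) x)
    (hv' : ∀ x ∈ Icc ξim ξi, HasDerivWithinAt v' (v'' x) (Icc ξim ξi) x)
    (hv'' : ContinuousOn v'' (Icc ξim ξi)) :
    ∫ x in ξim..ξi, (ε * v'' x + ai * v' x) * psiLeft ε ai ξim ξi x
      = ε * v' ξi - ai / (Real.exp (ai * (ξi - ξim) / ε) - 1) * (v ξi - v ξim) := by
  rw [integral_diffusion_convection_mul_eq h.le hε hv hv' hv''
    (continuous_psiLeft ε ai ξim ξi).continuousOn (fun x _ => hasDerivAt_psiLeft ε ai ξim ξi x),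
    psiLeft_start, psiLeft_node hε hai h.ne]
  ring

theorem integral_diffusion_convection_mul_psiRight (hε : ε ≠ 0) (hai : ai ≠ 0) (h : ξi < ξip)
    (hv : ∀ x ∈ Icc ξi ξip, HasDerivWithinAt v (v' x) (Icc ξi ξip) x)
    (hv' : ∀ x ∈ Icc ξi ξip, HasDerivWithinAt v' (v'' x) (Icc ξi ξip) x)
    (hv'' : ContinuousOn v'' (Icc ξi ξip)) :
    ∫ x in ξi..ξip, (ε * v'' x + ai * v' x) * psiRight ε ai ξi ξip x
      = ai / (1 - Real.exp (-(ai * (ξip - ξi)) / ε)) * (v ξip - v ξi) - ε * v' ξi := by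
  rw [integral_diffusion_convection_mul_eq (c := -(ai / (1 - Real.exp (-(ai * (ξip - ξi)) / ε))))
    h.le hε hv hv' hv'' (continuous_psiRight ε ai ξi ξip).continuousOn
    (fun x _ => (hasDerivAt_psiRight ε ai ξi ξip x).congr_deriv (by ring)),
    psiRight_end, psiRight_node hε hai h.ne]
  ring

end Pieces

/-- the exact local integral identity
`hbar_i⁻¹ ∫ (ε v'' + a_i v') ψ_i = ε v_{ξ̄ξ,i} + a_i (χ_i⁽¹⁾ v_{ξ̄,i} + χ_i⁽²⁾ v_{ξ,i})`
for every `v ∈ C²([ξ_{i−1}, ξ_{i+1}])`. -/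
theorem local_integral_identity
    (ε ai ξim ξi ξip hi hip hbar χ1 χ2 : ℝ)
    (hlt1 : ξim < ξi) (hlt2 : ξi < ξip) (hai : 0 < ai) (hε : 0 < ε)
    (hhi : hi = ξi - ξim) (hhip : hip = ξip - ξi) (hhbar : hbar = (hi + hip) / 2)
    (hχ1 : χ1 = hbar⁻¹ * (ε / ai - hi / (Real.exp (ai * hi / ε) - 1)))
    (hχ2 : χ2 = hbar⁻¹ * (hip / (1 - Real.exp (-(ai * hip) / ε)) - ε / ai))
    (v v' v'' : ℝ → ℝ)
    (hv1 : ∀ ξ ∈ Set.Icc ξim ξip, HasDerivWithinAt v (v' ξ) (Set.Icc ξim ξip) ξ)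
    (hv2 : ∀ ξ ∈ Set.Icc ξim ξip, HasDerivWithinAt v' (v'' ξ) (Set.Icc ξim ξip) ξ)
    (hv2c : ContinuousOn v'' (Set.Icc ξim ξip)) :
    hbar⁻¹ * ∫ ξ in ξim..ξip, (ε * v'' ξ + ai * v' ξ) * psiFun ε ai ξim ξi ξip ξ
      = ε * ((((v ξip - v ξi) / hip) - ((v ξi - v ξim) / hi)) / hbar)
        + ai * (χ1 * ((v ξi - v ξim) / hi) + χ2 * ((v ξip - v ξi) / hip)) := by
  subst hhi hhip hhbar hχ1 hχ2
  have hL : Icc ξim ξi ⊆ Icc ξim ξip := Icc_subset_Icc_right hlt2.le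
  have hR : Icc ξi ξip ⊆ Icc ξim ξip := Icc_subset_Icc_left hlt1.le
  have hv'c : ContinuousOn v' (Icc ξim ξip) := fun x hx => (hv2 x hx).continuousWithinAt
  rw [integral_mul_psiFun (f := fun ξ => ε * v'' ξ + ai * v' ξ) hlt1.le hlt2.le
      ((continuousOn_const.mul hv2c).add (continuousOn_const.mul hv'c)),
    integral_diffusion_convection_mul_psiLeft hε.ne' hai.ne' hlt1
      (fun x hx => (hv1 x (hL hx)).mono hL) (fun x hx => (hv2 x (hL hx)).mono hL) (hv2c.mono hL),
    integral_diffusion_convection_mul_psiRight hε.ne' hai.ne' hlt2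
      (fun x hx => (hv1 x (hR hx)).mono hR) (fun x hx => (hv2 x (hR hx)).mono hR) (hv2c.mono hR)]
  have hhi : ξi - ξim ≠ 0 := sub_ne_zero.mpr hlt1.ne'
  have hhip : ξip - ξi ≠ 0 := sub_ne_zero.mpr hlt2.ne'
  have hhbar : (ξi - ξim + (ξip - ξi)) / 2 ≠ 0 := by linarith
  -- keep the exponentials opaque, otherwise `field_simp` normalizes their arguments
  generalize Real.exp (ai * (ξi - ξim) / ε) - 1 = D1
  generalize 1 - Real.exp (-(ai * (ξip - ξi)) / ε) = D2
  field_simp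
  ring
end

section
/- On the Shishkin mesh, assume the transition point satisfies ρ = ā⁻¹ ε ln N ≤ T/2. Then for every index i with N/2 + 1 ≤ i ≤ N − 1: ∫_{ξ_{i−1}}^{ξ_{i+1}} ε⁻¹ e^{−ā ξ/ε} dξ = ā⁻¹ e^{−ā ξ_{i−1}/ε} (1 − e^{−ā(ξ_{i+1}−ξ_{i−1})/ε}) ≤ ā⁻¹ N⁻¹. -/
/-- Shishkin transition point `ρ = min(T/2, ā⁻¹ ε ln N)`. -/
noncomputable def sRho (T abar ε : ℝ) (N : ℕ) : ℝ :=
  min (T / 2) (abar⁻¹ * ε * Real.log N)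

/-- Fine step size `h⁽¹⁾ = 2ρ/N`. -/
noncomputable def sH1 (T abar ε : ℝ) (N : ℕ) : ℝ := 2 * sRho T abar ε N / N

/-- Coarse step size `h⁽²⁾ = 2(T−ρ)/N`. -/
noncomputable def sH2 (T abar ε : ℝ) (N : ℕ) : ℝ :=
  2 * (T - sRho T abar ε N) / N

/-- Shishkin mesh points `ξ_i`. -/
noncomputable def sXi (T abar ε : ℝ) (N i : ℕ) : ℝ :=
  if i ≤ N / 2 then (i : ℝ) * sH1 T abar ε N
  else sRho T abar ε N + ((i : ℝ) - (N : ℝ) / 2) * sH2 T abar ε N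

lemma exp_integral_eval (a b c : ℝ) (hc : c ≠ 0) :
    (∫ ξ in a..b, Real.exp (c * ξ)) = c⁻¹ * (Real.exp (c * b) - Real.exp (c * a)) := by
  rw [intervalIntegral.integral_comp_mul_left Real.exp hc, integral_exp, smul_eq_mul]

/-- coarse-part evaluation of the layer integral on the Shishkin
mesh, assuming `ρ = ā⁻¹ ε ln N ≤ T/2`: for `N/2 + 1 ≤ i ≤ N − 1`,
`∫_{ξ_{i−1}}^{ξ_{i+1}} ε⁻¹ e^{−ā ξ/ε} dξ
  = ā⁻¹ e^{−ā ξ_{i−1}/ε}(1 − e^{−ā(ξ_{i+1}−ξ_{i−1})/ε}) ≤ ā⁻¹ N⁻¹`. -/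
theorem coarse_part_layer_integral_bound
    (T abar ε : ℝ) (N : ℕ) (hT : 0 < T) (habar : 0 < abar)
    (hε : 0 < ε) (hε1 : ε ≤ 1) (hN : 4 ≤ N) (hNeven : Even N)
    (hρ : abar⁻¹ * ε * Real.log N ≤ T / 2) :
    ∀ i : ℕ, N / 2 + 1 ≤ i → i ≤ N - 1 →
      (∫ ξ in sXi T abar ε N (i - 1)..sXi T abar ε N (i + 1),
          ε⁻¹ * Real.exp (-(abar * ξ) / ε))
        = abar⁻¹ * Real.exp (-(abar * sXi T abar ε N (i - 1)) / ε) *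
            (1 - Real.exp (-(abar * (sXi T abar ε N (i + 1) - sXi T abar ε N (i - 1))) / ε)) ∧
      abar⁻¹ * Real.exp (-(abar * sXi T abar ε N (i - 1)) / ε) *
            (1 - Real.exp (-(abar * (sXi T abar ε N (i + 1) - sXi T abar ε N (i - 1))) / ε))
        ≤ abar⁻¹ * (N : ℝ)⁻¹ := by
  intro i hi1 hi2
  have hεne : ε ≠ 0 := ne_of_gt hε
  have habarne : abar ≠ 0 := ne_of_gt habar
  have hc : -(abar / ε) ≠ 0 := by
    simp [habarne, hεne]
  set a := sXi T abar ε N (i - 1) with ha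
  set b := sXi T abar ε N (i + 1) with hb
  set c : ℝ := -(abar / ε) with hcdef
  have hexpadd : Real.exp (c * a) * Real.exp (c * (b - a)) = Real.exp (c * b) := by
    rw [← Real.exp_add]; ring_nf
  have heq : (∫ ξ in a..b, ε⁻¹ * Real.exp (-(abar * ξ) / ε))
      = abar⁻¹ * Real.exp (-(abar * a) / ε) *
          (1 - Real.exp (-(abar * (b - a)) / ε)) := by
    have key : ∀ x : ℝ, -(abar * x) / ε = c * x := fun x => by rw [hcdef]; ring
    simp_rw [key]
    rw [intervalIntegral.integral_const_mul, exp_integral_eval a b c hc]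
    have hcinv : c⁻¹ = -(ε / abar) := by rw [hcdef, inv_neg, inv_div]
    rw [hcinv, ← hexpadd]
    field_simp
    ring
  refine ⟨heq, ?_⟩
  have hN0 : (0:ℝ) < N := by positivity
  have hN1 : (1:ℕ) ≤ N := by omega
  have hlogN : 0 ≤ Real.log N := Real.log_nonneg (by exact_mod_cast hN1)
  have hρval : sRho T abar ε N = abar⁻¹ * ε * Real.log N := min_eq_right hρ
  have hρnn : 0 ≤ sRho T abar ε N := by rw [hρval]; positivity
  have hρT : sRho T abar ε N ≤ T / 2 := min_le_left _ _
  have hNhalf : ((N / 2 : ℕ) : ℝ) = (N : ℝ) / 2 := by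
    obtain ⟨k, hk⟩ := hNeven
    subst hk
    have : (k + k) / 2 = k := by omega
    rw [this]
    push_cast
    ring
  have hxia : sRho T abar ε N ≤ a := by
    rw [ha, sXi]
    by_cases h : i - 1 ≤ N / 2
    · have hE : i - 1 = N / 2 := by omega
      rw [if_pos h, hE, hNhalf, sH1]
      have : (N : ℝ) / 2 * (2 * sRho T abar ε N / N) = sRho T abar ε N := by
        field_simp
      rw [this]
    · rw [if_neg h]
      have hh2 : 0 ≤ sH2 T abar ε N := by
        rw [sH2]
        have : 0 ≤ T - sRho T abar ε N := by linarith
        positivity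
      have hge : (N : ℝ) / 2 ≤ ((i - 1 : ℕ) : ℝ) := by
        rw [← hNhalf]
        exact_mod_cast Nat.le_of_lt (by omega)
      nlinarith
  have hρa : abar⁻¹ * ε * Real.log N ≤ a := hρval ▸ hxia
  have hE1 : Real.exp (-(abar * a) / ε) ≤ (N : ℝ)⁻¹ := by
    have hinv : ((N:ℝ))⁻¹ = Real.exp (-Real.log N) := by
      rw [Real.exp_neg, Real.exp_log hN0]
    rw [hinv]
    apply Real.exp_le_exp.mpr
    rw [neg_div, neg_le_neg_iff, le_div_iff₀ hε]
    have h3 : Real.log N * ε = abar * (abar⁻¹ * ε * Real.log N) := by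
      field_simp
    have h4 := mul_le_mul_of_nonneg_left hρa habar.le
    linarith
  have hE0 : 0 ≤ Real.exp (-(abar * a) / ε) := (Real.exp_pos _).le
  have hainv : 0 ≤ abar⁻¹ := (inv_pos.mpr habar).le
  have h0 : 0 ≤ abar⁻¹ * Real.exp (-(abar * a) / ε) := mul_nonneg hainv hE0
  have h1e : 1 - Real.exp (-(abar * (b - a)) / ε) ≤ 1 := by
    have := Real.exp_pos (-(abar * (b - a)) / ε)
    linarith
  calc abar⁻¹ * Real.exp (-(abar * a) / ε) * (1 - Real.exp (-(abar * (b - a)) / ε))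
      ≤ abar⁻¹ * Real.exp (-(abar * a) / ε) * 1 := mul_le_mul_of_nonneg_left h1e h0
    _ = abar⁻¹ * Real.exp (-(abar * a) / ε) := mul_one _
    _ ≤ abar⁻¹ * (N:ℝ)⁻¹ := mul_le_mul_of_nonneg_left hE1 hainv
end

section
/- There exists a constant C > 0 depending only on M, M′, ā and T such that the following holds. On the Shishkin mesh, let φ, ψ, g : [0,T] → ℝ be measurable with |φ(ξ)| ≤ M′, 0 ≤ ψ(ξ) ≤ 1, and |g(ξ)| ≤ M(1 + ε⁻¹ e^{−ā ξ/ε}) for all ξ ∈ [0,T]. Then for every index i with 1 ≤ i ≤ N − 1: |ħ_i⁻¹ ∫_{ξ_{i−1}}^{ξ_{i+1}} (ξ − ξ_i)(ξ − ξ_{i+1}) φ(ξ) g(ξ) ψ(ξ) dξ| ≤ C N⁻² ln N. -/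
/-!
Since `|(ξ - ξ_i)(ξ - ξ_{i+1}) φ ψ| ≤ M' (ξ_{i+1} - ξ_{i-1})²` on the two cells around `ξ_i`,
the claim reduces to `ξ_{i+1} - ξ_{i-1} ≤ 4T/N` and `ε⁻¹ ∫ e^{-āξ/ε} ≤ 8 ln N / (āN)` over those
cells. For the second: if `ρ = T/2` then `ε⁻¹ ≤ 2 ln N / (āT)` and the integrand is at most `1`;
in the fine part of the mesh the two cells have total width `4 ε ln N / (āN)`; in the coarse part
the left end point is at least `ρ - h⁽¹⁾`, where the layer has decayed to
`e^{-āρ/ε} e^{2 ln N / N} ≤ e² / N`.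
-/

open Real Set

section ShishkinMesh

variable {T abar ε : ℝ} {N : ℕ}

lemma sRho_le_half : sRho T abar ε N ≤ T / 2 := min_le_left _ _

lemma sRho_pos (habar : 0 < abar) (hT : 0 < T) (hε : 0 < ε) (hN : 2 ≤ N) :
    0 < sRho T abar ε N := by
  have : 0 < log N := log_pos (by exact_mod_cast hN)
  exact lt_min (by positivity) (by positivity)

lemma sH1_pos (habar : 0 < abar) (hT : 0 < T) (hε : 0 < ε) (hN : 2 ≤ N) :
    0 < sH1 T abar ε N := by
  have := sRho_pos habar hT hε hN
  unfold sH1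
  positivity

lemma sH1_le_sH2 : sH1 T abar ε N ≤ sH2 T abar ε N := by
  have := sRho_le_half (T := T) (abar := abar) (ε := ε) (N := N)
  unfold sH1 sH2
  gcongr
  linarith

lemma sH2_le (habar : 0 < abar) (hT : 0 < T) (hε : 0 < ε) (hN : 2 ≤ N) :
    sH2 T abar ε N ≤ 2 * T / N := by
  have := sRho_pos habar hT hε hN
  unfold sH2
  gcongr
  linarith

lemma half_mul_sH1 (hN : N ≠ 0) : (N : ℝ) / 2 * sH1 T abar ε N = sRho T abar ε N := by
  unfold sH1
  field_simp

lemma half_mul_sH2 (hN : N ≠ 0) : (N : ℝ) / 2 * sH2 T abar ε N = T - sRho T abar ε N := by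
  unfold sH2
  field_simp

lemma sXi_zero : sXi T abar ε N 0 = 0 := by
  simp [sXi]

lemma sXi_half (hN : N ≠ 0) (hNe : Even N) : sXi T abar ε N (N / 2) = sRho T abar ε N := by
  rw [sXi, if_pos le_rfl, Nat.cast_div (even_iff_two_dvd.mp hNe) two_ne_zero, Nat.cast_two,
    half_mul_sH1 hN]

lemma sXi_self (hN : N ≠ 0) : sXi T abar ε N N = T := by
  rw [sXi, if_neg (Nat.div_lt_self (Nat.pos_of_ne_zero hN) one_lt_two).not_ge, sub_half,
    half_mul_sH2 hN]
  ring

lemma sXi_succ (hN : N ≠ 0) (hNe : Even N) (j : ℕ) :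
    sXi T abar ε N (j + 1) =
      sXi T abar ε N j + if j + 1 ≤ N / 2 then sH1 T abar ε N else sH2 T abar ε N := by
  rcases lt_trichotomy (j + 1) (N / 2 + 1) with hj | hj | hj
  · simp only [sXi, if_pos (Nat.le_of_lt_succ hj), if_pos (by omega : j ≤ N / 2)]
    push_cast
    ring
  · obtain rfl : j = N / 2 := by omega
    rw [sXi_half hN hNe, sXi, if_neg (by omega), if_neg (by omega),
      Nat.cast_add_one, Nat.cast_div (even_iff_two_dvd.mp hNe) two_ne_zero, Nat.cast_two]
    ring
  · simp only [sXi, if_neg (by omega : ¬ j + 1 ≤ N / 2), if_neg (by omega : ¬ j ≤ N / 2)]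
    push_cast
    ring

lemma sXi_half_sub_one (hN : N ≠ 0) (hNe : Even N) :
    sXi T abar ε N (N / 2 - 1) = sRho T abar ε N - sH1 T abar ε N := by
  have h := sXi_succ (T := T) (abar := abar) (ε := ε) hN hNe (N / 2 - 1)
  rw [Nat.sub_add_cancel (by obtain ⟨k, rfl⟩ := hNe; omega), if_pos le_rfl, sXi_half hN hNe] at h
  linarith

lemma sXi_succ_sub_mem (hN : N ≠ 0) (hNe : Even N) (j : ℕ) :
    sXi T abar ε N (j + 1) - sXi T abar ε N j ∈ Icc (sH1 T abar ε N) (sH2 T abar ε N) := by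
  rw [sXi_succ hN hNe, add_sub_cancel_left]
  split_ifs
  exacts [⟨le_rfl, sH1_le_sH2⟩, ⟨sH1_le_sH2, le_rfl⟩]

lemma sXi_monotone (habar : 0 < abar) (hT : 0 < T) (hε : 0 < ε) (hN : 2 ≤ N) (hNe : Even N) :
    Monotone (sXi T abar ε N) :=
  monotone_nat_of_le_succ fun j => by
    have := (sXi_succ_sub_mem (T := T) (abar := abar) (ε := ε) (by omega) hNe j).1
    linarith [sH1_pos habar hT hε hN]

end ShishkinMesh

section LayerIntegral

variable {abar ε : ℝ}

lemma integral_exp_layer (habar : 0 < abar) (hε : 0 < ε) (a c : ℝ) :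
    ∫ t in a..c, exp (-(abar * t) / ε) =
      ε / abar * (exp (-(abar * a) / ε) - exp (-(abar * c) / ε)) := by
  have hk : -abar / ε ≠ 0 := div_ne_zero (neg_ne_zero.2 habar.ne') hε.ne'
  have h := intervalIntegral.integral_comp_mul_left exp hk (a := a) (b := c)
  simp only [integral_exp, smul_eq_mul] at h
  convert h using 1
  · congr 1; ext t; ring_nf
  · field_simp
    ring_nf

lemma integral_exp_layer_le_exp (habar : 0 < abar) (hε : 0 < ε) (a c : ℝ) :
    ∫ t in a..c, exp (-(abar * t) / ε) ≤ ε / abar * exp (-(abar * a) / ε) := by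
  rw [integral_exp_layer habar hε]
  gcongr
  linarith [exp_pos (-(abar * c) / ε)]

lemma integral_exp_layer_le_sub (habar : 0 < abar) (hε : 0 < ε) {a c : ℝ} (ha : 0 ≤ a)
    (hac : a ≤ c) : ∫ t in a..c, exp (-(abar * t) / ε) ≤ c - a := by
  have hcont : Continuous fun t => exp (-(abar * t) / ε) := by fun_prop
  calc ∫ t in a..c, exp (-(abar * t) / ε) ≤ ∫ _ in a..c, (1 : ℝ) :=
        intervalIntegral.integral_mono_on hac (hcont.intervalIntegrable _ _)
          intervalIntegrable_const fun t ht => exp_le_one_iff.2 <| by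
            have : 0 ≤ abar * t / ε := by have := ha.trans ht.1; positivity
            rw [neg_div]; linarith
    _ = c - a := by simp

end LayerIntegral

lemma integral_layer_weight (M abar ε a c : ℝ) :
    ∫ t in a..c, M * (1 + ε⁻¹ * exp (-(abar * t) / ε)) =
      M * ((c - a) + ε⁻¹ * ∫ t in a..c, exp (-(abar * t) / ε)) := by
  rw [intervalIntegral.integral_const_mul, intervalIntegral.integral_add intervalIntegrable_const
    ((by fun_prop : Continuous fun t => ε⁻¹ * exp (-(abar * t) / ε)).intervalIntegrable _ _),
    intervalIntegral.integral_const_mul]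
  simp

lemma abs_inv_half_mul_integral_le {φ ψ g w : ℝ → ℝ} {a b c M' : ℝ} (hab : a ≤ b) (hbc : b ≤ c)
    (hφ : ∀ t ∈ Icc a c, |φ t| ≤ M') (hψ : ∀ t ∈ Icc a c, 0 ≤ ψ t ∧ ψ t ≤ 1)
    (hg : ∀ t ∈ Icc a c, |g t| ≤ w t) (hw : IntervalIntegrable w MeasureTheory.volume a c) :
    |((c - a) / 2)⁻¹ * ∫ t in a..c, (t - b) * (t - c) * φ t * g t * ψ t| ≤
      2 * M' * (c - a) * ∫ t in a..c, w t := by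
  have hac : a ≤ c := hab.trans hbc
  have hpt : ∀ t ∈ Icc a c,
      ‖(t - b) * (t - c) * φ t * g t * ψ t‖ ≤ (c - a) ^ 2 * M' * w t := by
    intro t ht
    have h1 : |t - b| ≤ c - a := abs_le.2 ⟨by linarith [ht.1], by linarith [ht.2]⟩
    have h2 : |t - c| ≤ c - a := abs_le.2 ⟨by linarith [ht.1], by linarith [ht.2]⟩
    have h3 : |ψ t| ≤ 1 := abs_le.2 ⟨by linarith [(hψ t ht).1], (hψ t ht).2⟩
    have hM' : 0 ≤ M' := (abs_nonneg _).trans (hφ t ht)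
    rw [Real.norm_eq_abs, abs_mul, abs_mul, abs_mul, abs_mul]
    calc |t - b| * |t - c| * |φ t| * |g t| * |ψ t| ≤ (c - a) * (c - a) * M' * w t * 1 := by
          gcongr
          exacts [mul_nonneg (mul_nonneg (mul_self_nonneg _) hM') ((abs_nonneg _).trans (hg t ht)),
            hφ t ht, hg t ht]
      _ = (c - a) ^ 2 * M' * w t := by ring
  have hI := intervalIntegral.norm_integral_le_of_norm_le hac
    (MeasureTheory.ae_of_all _ fun t ht => hpt t (Ioc_subset_Icc_self ht)) (hw.const_mul _)
  rw [intervalIntegral.integral_const_mul, Real.norm_eq_abs] at hI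
  rw [abs_mul, abs_inv, abs_of_nonneg (by linarith : 0 ≤ (c - a) / 2)]
  calc ((c - a) / 2)⁻¹ * |∫ t in a..c, (t - b) * (t - c) * φ t * g t * ψ t|
      ≤ ((c - a) / 2)⁻¹ * ((c - a) ^ 2 * M' * ∫ t in a..c, w t) := by gcongr
    _ = 2 * M' * (c - a) * ∫ t in a..c, w t := by
      rcases hac.eq_or_lt with h | h
      · simp [h]
      · field_simp [(sub_pos.2 h).ne']

lemma one_le_log_natCast {N : ℕ} (hN : 3 ≤ N) : 1 ≤ log N := by
  rw [le_log_iff_exp_le (by positivity)]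
  have : (3 : ℝ) ≤ N := by exact_mod_cast hN
  linarith [exp_one_lt_d9]

section ShishkinLayer

variable {T abar ε : ℝ} {N : ℕ}

lemma sXi_add_two_sub_le (habar : 0 < abar) (hT : 0 < T) (hε : 0 < ε) (hN : 2 ≤ N)
    (hNe : Even N) (j : ℕ) : sXi T abar ε N (j + 2) - sXi T abar ε N j ≤ 4 * T / N := by
  have h₁ := (sXi_succ_sub_mem (T := T) (abar := abar) (ε := ε) (by omega) hNe j).2
  have h₂ := (sXi_succ_sub_mem (T := T) (abar := abar) (ε := ε) (by omega) hNe (j + 1)).2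
  rw [add_assoc, one_add_one_eq_two] at h₂
  have := sH2_le habar hT hε hN
  linarith [show 4 * T / N = 2 * (2 * T / N) by ring]

lemma exp_neg_sXi_le_of_sRho_eq (habar : 0 < abar) (hT : 0 < T) (hε : 0 < ε) (hN : 2 ≤ N)
    (hNe : Even N) (hρ : sRho T abar ε N = abar⁻¹ * ε * log N) {j : ℕ} (hj : N / 2 - 1 ≤ j) :
    exp (-(abar * sXi T abar ε N j) / ε) ≤ 8 / N := by
  have hNpos : (0 : ℝ) < N := by positivity
  have ha : sRho T abar ε N - sH1 T abar ε N ≤ sXi T abar ε N j :=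
    sXi_half_sub_one (by omega) hNe ▸ sXi_monotone habar hT hε hN hNe hj
  have hexponent : -(abar * (sRho T abar ε N - sH1 T abar ε N)) / ε = -log N + 2 * log N / N := by
    rw [sH1, hρ]
    field_simp
    ring
  have hsmall : 2 * log N / N ≤ 2 := by
    rw [div_le_iff₀ hNpos]
    linarith [log_le_sub_one_of_pos hNpos]
  have hexp_two : exp 2 < 8 := by
    rw [show (2 : ℝ) = 1 + 1 by norm_num, exp_add]
    nlinarith [exp_one_lt_d9, exp_pos 1]
  calc exp (-(abar * sXi T abar ε N j) / ε) ≤ exp (-log N + 2 * log N / N) := by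
        rw [← hexponent]
        gcongr
    _ = (N : ℝ)⁻¹ * exp (2 * log N / N) := by rw [exp_add, exp_neg, exp_log hNpos]
    _ ≤ (N : ℝ)⁻¹ * 8 := by gcongr; exact (exp_le_exp.2 hsmall).trans hexp_two.le
    _ = 8 / N := by ring

lemma inv_mul_integral_exp_sXi_le (habar : 0 < abar) (hT : 0 < T) (hε : 0 < ε) (hN : 3 ≤ N)
    (hNe : Even N) (j : ℕ) :
    ε⁻¹ * ∫ t in sXi T abar ε N j..sXi T abar ε N (j + 2), exp (-(abar * t) / ε) ≤
      8 * log N / (abar * N) := by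
  have hmono := sXi_monotone habar hT hε (by omega) hNe
  have hlog := one_le_log_natCast hN
  have hlen := integral_exp_layer_le_sub habar hε
    (sXi_zero.symm.trans_le (hmono (Nat.zero_le j))) (hmono (show j ≤ j + 2 by omega))
  rcases le_or_gt (T / 2) (abar⁻¹ * ε * log N) with hρ | hρ
  · calc ε⁻¹ * ∫ t in sXi T abar ε N j..sXi T abar ε N (j + 2), exp (-(abar * t) / ε)
        ≤ ε⁻¹ * (4 * T / N) := by
          gcongr
          exact hlen.trans (sXi_add_two_sub_le habar hT hε (by omega) hNe j)
      _ ≤ ε⁻¹ * (4 * (2 * (abar⁻¹ * ε * log N)) / N) := by gcongr; linarith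
      _ = 8 * log N / (abar * N) := by field_simp; ring
  have hρ_eq : sRho T abar ε N = abar⁻¹ * ε * log N := min_eq_right hρ.le
  rcases le_or_gt (j + 2) (N / 2) with hfine | hcoarse
  · have hwidth : sXi T abar ε N (j + 2) - sXi T abar ε N j = 4 * (abar⁻¹ * ε * log N) / N := by
      simp only [sXi, if_pos hfine, if_pos (by omega : j ≤ N / 2), sH1, hρ_eq]
      push_cast
      ring
    calc ε⁻¹ * ∫ t in sXi T abar ε N j..sXi T abar ε N (j + 2), exp (-(abar * t) / ε)
        ≤ ε⁻¹ * (4 * (abar⁻¹ * ε * log N) / N) := by rw [← hwidth]; gcongr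
      _ ≤ 8 * log N / (abar * N) := by
        field_simp
        nlinarith [log_natCast_nonneg N]
  · calc ε⁻¹ * ∫ t in sXi T abar ε N j..sXi T abar ε N (j + 2), exp (-(abar * t) / ε)
        ≤ ε⁻¹ * (ε / abar * exp (-(abar * sXi T abar ε N j) / ε)) := by
          gcongr
          exact integral_exp_layer_le_exp habar hε _ _
      _ ≤ ε⁻¹ * (ε / abar * (8 / N)) := by
          gcongr
          exact exp_neg_sXi_le_of_sRho_eq habar hT hε (by omega) hNe hρ_eq (by omega)
      _ ≤ 8 * log N / (abar * N) := by
        field_simp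
        nlinarith

lemma abs_remainder_sXi_le {M M' : ℝ} {φ ψ g : ℝ → ℝ} (habar : 0 < abar) (hT : 0 < T)
    (hε : 0 < ε) (hN : 2 ≤ N) (hNe : Even N) {j : ℕ} (hj : j + 2 ≤ N)
    (hφ : ∀ ξ ∈ Icc 0 T, |φ ξ| ≤ M') (hψ : ∀ ξ ∈ Icc 0 T, 0 ≤ ψ ξ ∧ ψ ξ ≤ 1)
    (hg : ∀ ξ ∈ Icc 0 T, |g ξ| ≤ M * (1 + ε⁻¹ * exp (-(abar * ξ) / ε))) :
    |((sXi T abar ε N (j + 2) - sXi T abar ε N j) / 2)⁻¹ *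
        ∫ ξ in sXi T abar ε N j..sXi T abar ε N (j + 2),
          (ξ - sXi T abar ε N (j + 1)) * (ξ - sXi T abar ε N (j + 2)) * φ ξ * g ξ * ψ ξ| ≤
      2 * M' * (sXi T abar ε N (j + 2) - sXi T abar ε N j) *
        (M * ((sXi T abar ε N (j + 2) - sXi T abar ε N j) +
          ε⁻¹ * ∫ t in sXi T abar ε N j..sXi T abar ε N (j + 2), exp (-(abar * t) / ε))) := by
  have hmono := sXi_monotone habar hT hε hN hNe
  have hsub : Icc (sXi T abar ε N j) (sXi T abar ε N (j + 2)) ⊆ Icc 0 T :=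
    Icc_subset_Icc (sXi_zero.symm.trans_le (hmono (Nat.zero_le j)))
      ((hmono hj).trans_eq (sXi_self (by omega)))
  rw [← integral_layer_weight]
  exact abs_inv_half_mul_integral_le (hmono (by omega : j ≤ j + 1))
    (hmono (by omega : j + 1 ≤ j + 2))
    (fun t ht => hφ t (hsub ht)) (fun t ht => hψ t (hsub ht)) (fun t ht => hg t (hsub ht))
    ((by fun_prop : Continuous fun t => M * (1 + ε⁻¹ * exp (-(abar * t) / ε))).intervalIntegrable _ _)

end ShishkinLayer

/-- uniform `O(N⁻² ln N)` bound for weighted local quadrature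
remainders on the Shishkin mesh with a layer-type factor `g`. -/
theorem weighted_remainder_layer_bound
    (M M' abar T : ℝ) (hM : 0 < M) (hM' : 0 < M') (habar : 0 < abar) (hT : 0 < T) :
    ∃ C : ℝ, 0 < C ∧ ∀ (ε : ℝ) (N : ℕ), 0 < ε → ε ≤ 1 → 4 ≤ N → Even N →
      ∀ φ ψ g : ℝ → ℝ, Measurable φ → Measurable ψ → Measurable g →
        (∀ ξ ∈ Set.Icc 0 T, |φ ξ| ≤ M') →
        (∀ ξ ∈ Set.Icc 0 T, 0 ≤ ψ ξ ∧ ψ ξ ≤ 1) →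
        (∀ ξ ∈ Set.Icc 0 T, |g ξ| ≤ M * (1 + ε⁻¹ * Real.exp (-(abar * ξ) / ε))) →
        ∀ i : ℕ, 1 ≤ i → i ≤ N - 1 →
          |((sXi T abar ε N (i + 1) - sXi T abar ε N (i - 1)) / 2)⁻¹ *
              ∫ ξ in sXi T abar ε N (i - 1)..sXi T abar ε N (i + 1),
                (ξ - sXi T abar ε N i) * (ξ - sXi T abar ε N (i + 1)) * φ ξ * g ξ * ψ ξ|
            ≤ C * ((N : ℝ) ^ 2)⁻¹ * Real.log N := by
  refine ⟨32 * M' * M * T * (T + 2 / abar), by positivity, ?_⟩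
  intro ε N hε _ hN hNe φ ψ g _ _ _ hφ hψ hg i hi hiN
  obtain ⟨j, rfl⟩ : ∃ j, i = j + 1 := ⟨i - 1, by omega⟩
  simp only [Nat.add_sub_cancel, add_assoc, Nat.reduceAdd]
  have hloc := abs_remainder_sXi_le habar hT hε (by omega) hNe (j := j) (by omega) hφ hψ hg
  have hmono := sXi_monotone habar hT hε (by omega) hNe
  have hwidth := sXi_add_two_sub_le habar hT hε (by omega) hNe j
  have hlayer := inv_mul_integral_exp_sXi_le habar hT hε (by omega) hNe j
  have hlog := one_le_log_natCast (N := N) (by omega)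
  have hE : 0 ≤ ε⁻¹ * ∫ t in sXi T abar ε N j..sXi T abar ε N (j + 2), exp (-(abar * t) / ε) :=
    mul_nonneg (by positivity) (intervalIntegral.integral_nonneg (hmono (by omega))
      fun t _ => (exp_pos _).le)
  have hw : 0 ≤ sXi T abar ε N (j + 2) - sXi T abar ε N j := sub_nonneg.2 (hmono (by omega))
  calc _ ≤ _ := hloc
    _ ≤ 2 * M' * (4 * T / N) * (M * (4 * T / N + 8 * log N / (abar * N))) := by
      gcongr
    _ = 8 * M' * M * T * (4 * T + 8 / abar * log N) * ((N : ℝ) ^ 2)⁻¹ := by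
      field_simp
      ring
    _ ≤ 8 * M' * M * T * (4 * T * log N + 8 / abar * log N) * ((N : ℝ) ^ 2)⁻¹ := by
      gcongr 8 * M' * M * T * (?_ + _) * _
      exact le_mul_of_one_le_right (by positivity) hlog
    _ = 32 * M' * M * T * (T + 2 / abar) * ((N : ℝ) ^ 2)⁻¹ * log N := by ring
end

section
/- There exists a constant C > 0 depending only on ā and T such that, on the Shishkin mesh (with ρ = min(T/2, ā⁻¹ ε ln N)): Σ_{j=1}^{N} ∫_{ξ_{j−1}}^{ξ_j} (ξ_j − τ)(τ − ξ_{j−1}) ε⁻² e^{−ā τ/ε} dτ ≤ C N⁻² ln N. -/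
open Finset Real
open scoped Nat

noncomputable def layerWeight (abar ε τ : ℝ) : ℝ := (ε ^ 2)⁻¹ * exp (-(abar * τ) / ε)

noncomputable def bubbleIntegral (w : ℝ → ℝ) (a b : ℝ) : ℝ :=
  ∫ τ in a..b, (b - τ) * (τ - a) * w τ

theorem sum_Icc_one_sub_one_eq_sum_range {M : Type*} [AddCommMonoid M] (g : ℕ → ℕ → M)
    (N : ℕ) : ∑ j ∈ Icc 1 N, g (j - 1) j = ∑ k ∈ range N, g k (k + 1) := by
  induction N with
  | zero => simp
  | succ N ih => rw [sum_Icc_succ_top (by omega), ih, sum_range_succ, Nat.add_sub_cancel]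

theorem integral_sub_pow_mul_exp_neg_le {a b c : ℝ} (k : ℕ) (hab : a ≤ b) (hc : 0 < c) :
    ∫ τ in a..b, (τ - a) ^ k * exp (-(c * τ)) ≤ exp (-(c * a)) * (k ! / c ^ (k + 1)) := by
  have hshift : ∀ τ, (τ - a) ^ k * exp (-(c * τ))
      = exp (-(c * a)) * ((τ - a) ^ k * exp (-(c * (τ - a)))) := by
    intro τ
    rw [mul_left_comm, ← exp_add]
    ring_nf
  simp_rw [hshift]
  rw [intervalIntegral.integral_const_mul,
    intervalIntegral.integral_comp_sub_right (fun s => s ^ k * exp (-(c * s))), sub_self]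
  exact mul_le_mul_of_nonneg_left (intervalIntegral_pow_mul_exp_neg_le (sub_nonneg.2 hab) hc)
    (exp_pos _).le

section LayerWeight

variable {abar ε a b : ℝ}

theorem continuous_layerWeight : Continuous (layerWeight abar ε) := by
  unfold layerWeight
  fun_prop

theorem layerWeight_nonneg (τ : ℝ) : 0 ≤ layerWeight abar ε τ := by
  unfold layerWeight
  positivity

theorem layerWeight_eq (τ : ℝ) :
    layerWeight abar ε τ = (ε ^ 2)⁻¹ * exp (-(abar / ε * τ)) := by
  rw [layerWeight, neg_div, mul_div_right_comm]

theorem integral_layerWeight_le (habar : 0 < abar) (hε : 0 < ε) (hab : a ≤ b) :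
    ∫ τ in a..b, layerWeight abar ε τ ≤ exp (-(abar * a) / ε) / (abar * ε) := by
  have h := integral_sub_pow_mul_exp_neg_le 0 hab (div_pos habar hε)
  simp only [pow_zero, one_mul, Nat.factorial_zero, Nat.cast_one, zero_add, pow_one] at h
  simp_rw [layerWeight_eq, intervalIntegral.integral_const_mul]
  calc (ε ^ 2)⁻¹ * ∫ τ in a..b, exp (-(abar / ε * τ))
      ≤ (ε ^ 2)⁻¹ * (exp (-(abar / ε * a)) * (1 / (abar / ε))) := by gcongr
    _ = exp (-(abar * a) / ε) / (abar * ε) := by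
      rw [neg_div, mul_div_right_comm]
      field_simp

theorem integral_sub_mul_layerWeight_le (habar : 0 < abar) (hε : 0 < ε) (hab : a ≤ b) :
    ∫ τ in a..b, (τ - a) * layerWeight abar ε τ ≤ exp (-(abar * a) / ε) / abar ^ 2 := by
  have h := integral_sub_pow_mul_exp_neg_le 1 hab (div_pos habar hε)
  simp only [pow_one, Nat.factorial_one, Nat.cast_one] at h
  simp_rw [layerWeight_eq, mul_left_comm _ (ε ^ 2)⁻¹, intervalIntegral.integral_const_mul]
  calc (ε ^ 2)⁻¹ * ∫ τ in a..b, (τ - a) * exp (-(abar / ε * τ))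
      ≤ (ε ^ 2)⁻¹ * (exp (-(abar / ε * a)) * (1 / (abar / ε) ^ 2)) := by gcongr
    _ = exp (-(abar * a) / ε) / abar ^ 2 := by
      rw [neg_div, mul_div_right_comm]
      field_simp

end LayerWeight

section UniformMesh

variable {w f : ℝ → ℝ} {x : ℕ → ℝ} {a h : ℝ} {n : ℕ}

theorem sum_bubbleIntegral_le_integral (hh : 0 ≤ h) (hx : ∀ k ≤ n, x k = a + k * h)
    (hw : Continuous w) (hf : Continuous f)
    (hle : ∀ k < n, ∀ τ ∈ Set.Icc (x k) (x (k + 1)), (x (k + 1) - τ) * (τ - x k) * w τ ≤ f τ) :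
    ∑ k ∈ range n, bubbleIntegral w (x k) (x (k + 1)) ≤ ∫ τ in a..a + n * h, f τ := by
  calc ∑ k ∈ range n, bubbleIntegral w (x k) (x (k + 1))
      ≤ ∑ k ∈ range n, ∫ τ in x k..x (k + 1), f τ := by
        refine sum_le_sum fun k hk => ?_
        have hk := mem_range.1 hk
        have hcell : x k ≤ x (k + 1) := by
          rw [hx k hk.le, hx (k + 1) hk]
          push_cast
          linarith
        exact intervalIntegral.integral_mono_on hcell
          ((by fun_prop : Continuous _).intervalIntegrable _ _) (hf.intervalIntegrable _ _)
          (hle k hk)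
    _ = ∫ τ in x 0..x n, f τ :=
        intervalIntegral.sum_integral_adjacent_intervals fun _ _ => hf.intervalIntegrable _ _
    _ = ∫ τ in a..a + n * h, f τ := by
        rw [hx 0 n.zero_le, hx n le_rfl, Nat.cast_zero, zero_mul, add_zero]

theorem sum_bubbleIntegral_le_sq_mul_integral (hh : 0 ≤ h) (hx : ∀ k ≤ n, x k = a + k * h)
    (hw : Continuous w) (hw0 : ∀ τ, 0 ≤ w τ) :
    ∑ k ∈ range n, bubbleIntegral w (x k) (x (k + 1)) ≤ h ^ 2 * ∫ τ in a..a + n * h, w τ := by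
  rw [← intervalIntegral.integral_const_mul]
  refine sum_bubbleIntegral_le_integral hh hx hw (by fun_prop) fun k hk τ ⟨hτk, hτk'⟩ => ?_
  have hstep : x (k + 1) = x k + h := by
    rw [hx k hk.le, hx (k + 1) hk]
    push_cast
    ring
  rw [sq]
  exact mul_le_mul_of_nonneg_right
    (mul_le_mul (by linarith) (by linarith) (by linarith) hh) (hw0 τ)

theorem sum_bubbleIntegral_le_mul_integral_sub_mul (hh : 0 ≤ h) (hx : ∀ k ≤ n, x k = a + k * h)
    (hw : Continuous w) (hw0 : ∀ τ, 0 ≤ w τ) :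
    ∑ k ∈ range n, bubbleIntegral w (x k) (x (k + 1))
      ≤ h * ∫ τ in a..a + n * h, (τ - a) * w τ := by
  rw [← intervalIntegral.integral_const_mul]
  refine sum_bubbleIntegral_le_integral hh hx hw (by fun_prop) fun k hk τ ⟨hτk, hτk'⟩ => ?_
  have hstep : x (k + 1) = x k + h := by
    rw [hx k hk.le, hx (k + 1) hk]
    push_cast
    ring
  have hak : a ≤ x k := by
    rw [hx k hk.le]
    have : 0 ≤ (k : ℝ) * h := by positivity
    linarith
  rw [← mul_assoc]
  exact mul_le_mul_of_nonneg_right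
    (mul_le_mul (by linarith) (by linarith) (by linarith) hh) (hw0 τ)

end UniformMesh

section ShishkinMesh

variable (T abar ε : ℝ) {m : ℕ}

theorem sXi_double_of_le {i : ℕ} (hi : i ≤ m) :
    sXi T abar ε (m + m) i = 0 + i * (sRho T abar ε (m + m) / m) := by
  have hhalf : (m + m) / 2 = m := by omega
  rw [sXi, hhalf, if_pos hi, sH1, zero_add, Nat.cast_add, ← two_mul (m : ℝ),
    mul_div_mul_left _ _ two_ne_zero]

theorem sXi_double_add (hm : m ≠ 0) (k : ℕ) :
    sXi T abar ε (m + m) (m + k)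
      = sRho T abar ε (m + m) + k * ((T - sRho T abar ε (m + m)) / m) := by
  have hm' : (m : ℝ) ≠ 0 := Nat.cast_ne_zero.2 hm
  rcases Nat.eq_zero_or_pos k with rfl | hk
  · rw [add_zero, sXi_double_of_le T abar ε le_rfl]
    field_simp
    ring
  · have hhalf : (m + m) / 2 = m := by omega
    rw [sXi, hhalf, if_neg (by omega), sH2]
    push_cast
    field_simp
    ring

end ShishkinMesh

section ShishkinBounds

variable {T abar ε : ℝ} {m : ℕ}

theorem sRho_nonneg (hT : 0 ≤ T) (habar : 0 ≤ abar) (hε : 0 ≤ ε) {N : ℕ} (hN : 1 ≤ N) :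
    0 ≤ sRho T abar ε N :=
  le_min (by linarith) (by have := log_nonneg (Nat.one_le_cast.2 hN); positivity)

theorem sum_bubbleIntegral_sXi_fine_le (habar : 0 < abar) (hT : 0 < T) (hε : 0 < ε)
    (hm : m ≠ 0) :
    ∑ k ∈ range m, bubbleIntegral (layerWeight abar ε)
        (sXi T abar ε (m + m) k) (sXi T abar ε (m + m) (k + 1))
      ≤ 2 * T / abar ^ 2 * (((m + m : ℕ) : ℝ) ^ 2)⁻¹ * log (m + m : ℕ) := by
  set ρ := sRho T abar ε (m + m)
  have hρ0 : 0 ≤ ρ := sRho_nonneg hT.le habar.le hε.le (by omega)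
  have hρT : ρ ≤ T / 2 := min_le_left _ _
  have hρL : ρ ≤ abar⁻¹ * ε * log (m + m : ℕ) := min_le_right _ _
  have hm0 : (0 : ℝ) < m := Nat.cast_pos.2 (Nat.pos_of_ne_zero hm)
  calc _ ≤ (ρ / m) ^ 2 * ∫ τ in 0..0 + m * (ρ / m), layerWeight abar ε τ :=
        sum_bubbleIntegral_le_sq_mul_integral (by positivity)
          (fun k hk => sXi_double_of_le T abar ε hk) continuous_layerWeight layerWeight_nonneg
    _ ≤ (ρ / m) ^ 2 * (exp (-(abar * 0) / ε) / (abar * ε)) := by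
        gcongr
        exact integral_layerWeight_le habar hε (by positivity)
    _ = ρ * ρ / (m ^ 2 * abar * ε) := by
        rw [mul_zero, neg_zero, zero_div, exp_zero]
        field_simp
    _ ≤ T / 2 * (abar⁻¹ * ε * log (m + m : ℕ)) / (m ^ 2 * abar * ε) := by
        gcongr
    _ = _ := by
        push_cast
        field_simp
        ring

theorem sum_bubbleIntegral_sXi_coarse_le_of_sRho_eq_half (habar : 0 < abar) (hT : 0 < T)
    (hε : 0 < ε) (hm : m ≠ 0) (hρ : sRho T abar ε (m + m) = T / 2) :
    ∑ k ∈ range m, bubbleIntegral (layerWeight abar ε)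
        (sXi T abar ε (m + m) (m + k)) (sXi T abar ε (m + m) (m + k + 1))
      ≤ 2 * T / abar ^ 2 * (((m + m : ℕ) : ℝ) ^ 2)⁻¹ := by
  have hm0 : (0 : ℝ) < m := Nat.cast_pos.2 (Nat.pos_of_ne_zero hm)
  have hx := fun k (_ : k ≤ m) => sXi_double_add T abar ε hm k
  rw [hρ, sub_half] at hx
  have hdecay : exp (-(abar * (T / 2)) / ε) / (abar * ε) ≤ 2 / (abar ^ 2 * T) := by
    set y := abar * T / (2 * ε)
    have hy : y * exp (-y) ≤ 1 :=
      (mul_exp_neg_le_exp_neg_one y).trans (exp_le_one_iff.2 (by norm_num))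
    rw [div_le_div_iff₀ (by positivity) (by positivity),
      show -(abar * (T / 2)) / ε = -y by ring]
    calc exp (-y) * (abar ^ 2 * T) = y * exp (-y) * (2 * (abar * ε)) := by
          simp only [y]
          field_simp
      _ ≤ 1 * (2 * (abar * ε)) := by gcongr
      _ = 2 * (abar * ε) := one_mul _
  calc _ ≤ (T / 2 / m) ^ 2 * ∫ τ in T / 2..T / 2 + m * (T / 2 / m),
          layerWeight abar ε τ :=
        sum_bubbleIntegral_le_sq_mul_integral (by positivity) hx continuous_layerWeight
          layerWeight_nonneg
    _ ≤ (T / 2 / m) ^ 2 * (exp (-(abar * (T / 2)) / ε) / (abar * ε)) := by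
        gcongr
        exact integral_layerWeight_le habar hε (by simp only [le_add_iff_nonneg_right]; positivity)
    _ ≤ (T / 2 / m) ^ 2 * (2 / (abar ^ 2 * T)) := by gcongr
    _ = _ := by
        push_cast
        field_simp
        ring

theorem sum_bubbleIntegral_sXi_coarse_le_of_sRho_eq_log (habar : 0 < abar) (hT : 0 < T)
    (hε : 0 < ε) (hm : m ≠ 0) (hρ : sRho T abar ε (m + m) = abar⁻¹ * ε * log (m + m : ℕ)) :
    ∑ k ∈ range m, bubbleIntegral (layerWeight abar ε)
        (sXi T abar ε (m + m) (m + k)) (sXi T abar ε (m + m) (m + k + 1))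
      ≤ 2 * T / abar ^ 2 * (((m + m : ℕ) : ℝ) ^ 2)⁻¹ := by
  set ρ := sRho T abar ε (m + m)
  have hρ0 : 0 ≤ ρ := sRho_nonneg hT.le habar.le hε.le (by omega)
  have hρT : ρ ≤ T / 2 := min_le_left _ _
  have hm0 : (0 : ℝ) < m := Nat.cast_pos.2 (Nat.pos_of_ne_zero hm)
  have hdecay : exp (-(abar * ρ) / ε) = ((m + m : ℕ) : ℝ)⁻¹ := by
    rw [hρ, show -(abar * (abar⁻¹ * ε * log (m + m : ℕ))) / ε = -log (m + m : ℕ) by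
      field_simp, exp_neg, exp_log (by positivity)]
  calc _ ≤ (T - ρ) / m * ∫ τ in ρ..ρ + m * ((T - ρ) / m), (τ - ρ) * layerWeight abar ε τ :=
        sum_bubbleIntegral_le_mul_integral_sub_mul (by bound)
          (fun k _ => sXi_double_add T abar ε hm k) continuous_layerWeight layerWeight_nonneg
    _ ≤ (T - ρ) / m * (exp (-(abar * ρ) / ε) / abar ^ 2) := by
        gcongr
        · bound
        · exact integral_sub_mul_layerWeight_le habar hε (by bound)
    _ ≤ T / m * (((m + m : ℕ) : ℝ)⁻¹ / abar ^ 2) := by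
        rw [hdecay]
        gcongr
        linarith
    _ = _ := by
        push_cast
        field_simp
        ring

theorem sum_bubbleIntegral_sXi_coarse_le (habar : 0 < abar) (hT : 0 < T) (hε : 0 < ε)
    (hm : m ≠ 0) :
    ∑ k ∈ range m, bubbleIntegral (layerWeight abar ε)
        (sXi T abar ε (m + m) (m + k)) (sXi T abar ε (m + m) (m + k + 1))
      ≤ 2 * T / abar ^ 2 * (((m + m : ℕ) : ℝ) ^ 2)⁻¹ :=
  (min_choice (T / 2) (abar⁻¹ * ε * log (m + m : ℕ))).elim
    (sum_bubbleIntegral_sXi_coarse_le_of_sRho_eq_half habar hT hε hm)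
    (sum_bubbleIntegral_sXi_coarse_le_of_sRho_eq_log habar hT hε hm)

end ShishkinBounds

/-- full quadrature sum bound
`Σ_{j=1}^{N} ∫_{ξ_{j−1}}^{ξ_j} (ξ_j−τ)(τ−ξ_{j−1}) ε⁻² e^{−ā τ/ε} dτ ≤ C N⁻² ln N`
on the Shishkin mesh, with `C` depending only on `ā` and `T`. -/
theorem full_quadrature_sum_bound
    (abar T : ℝ) (habar : 0 < abar) (hT : 0 < T) :
    ∃ C : ℝ, 0 < C ∧ ∀ (ε : ℝ) (N : ℕ), 0 < ε → ε ≤ 1 → 4 ≤ N → Even N →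
      (∑ j ∈ Finset.Icc 1 N,
          ∫ τ in sXi T abar ε N (j - 1)..sXi T abar ε N j,
            (sXi T abar ε N j - τ) * (τ - sXi T abar ε N (j - 1)) *
              ((ε ^ 2)⁻¹ * Real.exp (-(abar * τ) / ε)))
        ≤ C * ((N : ℝ) ^ 2)⁻¹ * Real.log N := by
  refine ⟨4 * T / abar ^ 2, by positivity, ?_⟩
  rintro ε N hε - hN ⟨m, rfl⟩
  have hm : m ≠ 0 := by omega
  have hlog : 1 ≤ log (m + m : ℕ) := by
    have h4 : (4 : ℝ) ≤ (m + m : ℕ) := by exact_mod_cast hN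
    rw [le_log_iff_exp_le (by positivity)]
    linarith [exp_one_lt_three]
  set ξ := sXi T abar ε (m + m)
  calc _ = ∑ k ∈ range (m + m), bubbleIntegral (layerWeight abar ε) (ξ k) (ξ (k + 1)) :=
        sum_Icc_one_sub_one_eq_sum_range
          (fun i j => bubbleIntegral (layerWeight abar ε) (ξ i) (ξ j)) _
    _ = ∑ k ∈ range m, bubbleIntegral (layerWeight abar ε) (ξ k) (ξ (k + 1))
          + ∑ k ∈ range m, bubbleIntegral (layerWeight abar ε) (ξ (m + k)) (ξ (m + k + 1)) :=
        sum_range_add _ _ _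
    _ ≤ 2 * T / abar ^ 2 * (((m + m : ℕ) : ℝ) ^ 2)⁻¹ * log (m + m : ℕ)
          + 2 * T / abar ^ 2 * (((m + m : ℕ) : ℝ) ^ 2)⁻¹ * log (m + m : ℕ) :=
        add_le_add (sum_bubbleIntegral_sXi_fine_le habar hT hε hm)
          ((sum_bubbleIntegral_sXi_coarse_le habar hT hε hm).trans
            (le_mul_of_one_le_right (by positivity) hlog))
    _ = _ := by ring
end

section
/- Let N ≥ 2 be an integer, T > 0, Ā > 0, λ ∈ ℝ, and let ħ_0, …, ħ_N > 0 satisfy Σ_{k=1}^{N−1} ħ_k ≤ T. Let 𝒦 = (𝒦_{kj}) (1 ≤ k ≤ N−1, 0 ≤ j ≤ N), R = (R_k) (1 ≤ k ≤ N−1), and G = (G_{ik}) (1 ≤ i,k ≤ N−1) be real arrays with 0 ≤ G_{ik} ≤ Ā⁻¹ for all i, k, and set K̃ = max_{1≤k≤N−1} Σ_{j=0}^{N} ħ_j |𝒦_{kj}|. Assume |λ| T K̃ < Ā. If z = (z_0, …, z_N) satisfies z_0 = z_N = 0 and z_i = Σ_{k=1}^{N−1} ħ_k G_{ik} (λ Σ_{j=0}^{N}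 ħ_j 𝒦_{kj} z_j − R_k) for all 1 ≤ i ≤ N−1, then max_{0≤i≤N} |z_i| ≤ T · max_{1≤k≤N−1} |R_k| / (Ā − |λ| T K̃). -/
/-- discrete stability via the Green's function representation:
if `z_0 = z_N = 0` and
`z_i = Σ_k ħ_k G_{ik} (λ Σ_j ħ_j 𝒦_{kj} z_j − R_k)` with `0 ≤ G_{ik} ≤ Ā⁻¹`
and `|λ| T K̃ < Ā`, then `max |z_i| ≤ T max|R_k| / (Ā − |λ| T K̃)`. -/
theorem discrete_greens_stability
    (N : ℕ) (hN : 2 ≤ N) (T Abar lam : ℝ) (hT : 0 < T) (hAbar : 0 < Abar)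
    (hb : ℕ → ℝ) (hbpos : ∀ k, k ≤ N → 0 < hb k)
    (hbsum : ∑ k ∈ Finset.Icc 1 (N - 1), hb k ≤ T)
    (Kc : ℕ → ℕ → ℝ) (R : ℕ → ℝ) (G : ℕ → ℕ → ℝ)
    (hG : ∀ i k, 1 ≤ i → i ≤ N - 1 → 1 ≤ k → k ≤ N - 1 →
      0 ≤ G i k ∧ G i k ≤ Abar⁻¹)
    (hlam : |lam| * T *
        ((Finset.Icc 1 (N - 1)).sup' (Finset.nonempty_Icc.mpr (by omega))
          (fun k => ∑ j ∈ Finset.range (N + 1), hb j * |Kc k j|)) < Abar)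
    (z : ℕ → ℝ) (hz0 : z 0 = 0) (hzN : z N = 0)
    (hz : ∀ i, 1 ≤ i → i ≤ N - 1 →
      z i = ∑ k ∈ Finset.Icc 1 (N - 1), hb k * G i k *
        (lam * (∑ j ∈ Finset.range (N + 1), hb j * Kc k j * z j) - R k)) :
    ∀ i ≤ N, |z i| ≤
      T * ((Finset.Icc 1 (N - 1)).sup' (Finset.nonempty_Icc.mpr (by omega))
            (fun k => |R k|)) /
        (Abar - |lam| * T *
          ((Finset.Icc 1 (N - 1)).sup' (Finset.nonempty_Icc.mpr (by omega))
            (fun k => ∑ j ∈ Finset.range (N + 1), hb j * |Kc k j|))) := by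
  have ne1 : (Finset.Icc 1 (N - 1)).Nonempty := Finset.nonempty_Icc.mpr (by omega)
  have ne2 : (Finset.range (N + 1)).Nonempty := ⟨0, by simp⟩
  set Kt := (Finset.Icc 1 (N - 1)).sup' ne1
      (fun k => ∑ j ∈ Finset.range (N + 1), hb j * |Kc k j|) with hKtdef
  set Rm := (Finset.Icc 1 (N - 1)).sup' ne1 (fun k => |R k|) with hRmdef
  set M := (Finset.range (N + 1)).sup' ne2 (fun i => |z i|) with hMdef
  have hlam' : |lam| * T * Kt < Abar := hlam
  have hMle : ∀ j, j ≤ N → |z j| ≤ M := by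
    intro j hj
    rw [hMdef]
    exact Finset.le_sup' (fun i => |z i|) (Finset.mem_range.mpr (Nat.lt_succ_of_le hj))
  have hM0 : 0 ≤ M := le_trans (abs_nonneg _) (hMle 0 (by omega))
  have hRm0 : 0 ≤ Rm := le_trans (abs_nonneg (R 1))
    (Finset.le_sup' (fun k => |R k|) (Finset.mem_Icc.mpr ⟨le_refl 1, by omega⟩))
  have hKtle : ∀ k ∈ Finset.Icc 1 (N - 1),
      (∑ j ∈ Finset.range (N + 1), hb j * |Kc k j|) ≤ Kt := by
    intro k hk
    rw [hKtdef]
    exact Finset.le_sup' (fun k => ∑ j ∈ Finset.range (N + 1), hb j * |Kc k j|) hk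
  have hKt0 : 0 ≤ Kt := by
    refine le_trans ?_ (hKtle 1 (Finset.mem_Icc.mpr ⟨le_refl 1, by omega⟩))
    refine Finset.sum_nonneg fun j hj => ?_
    have := hbpos j (by simpa using Nat.lt_succ_iff.mp (Finset.mem_range.mp hj))
    positivity
  have hden : 0 < Abar - |lam| * T * Kt := by linarith
  -- key inequality
  have key : M * Abar ≤ |lam| * T * Kt * M + T * Rm := by
    obtain ⟨i0, hi0mem, hi0⟩ := Finset.exists_mem_eq_sup' ne2 (fun i => |z i|)
    have hi0N : i0 ≤ N := by simpa [Nat.lt_succ_iff] using Finset.mem_range.mp hi0mem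
    rcases eq_or_ne i0 0 with h0 | h0
    · have : M = 0 := hi0.trans (by rw [h0, hz0, abs_zero])
      rw [this]; nlinarith
    rcases eq_or_ne i0 N with hNN | hNN
    · have : M = 0 := hi0.trans (by rw [hNN, hzN, abs_zero])
      rw [this]; nlinarith
    have hi01 : 1 ≤ i0 := by omega
    have hi0N1 : i0 ≤ N - 1 := by omega
    have hstep : M ≤ (∑ k ∈ Finset.Icc 1 (N - 1), hb k) *
        (Abar⁻¹ * (|lam| * (Kt * M) + Rm)) := by
      calc M = |∑ k ∈ Finset.Icc 1 (N - 1), hb k * G i0 k *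
              (lam * (∑ j ∈ Finset.range (N + 1), hb j * Kc k j * z j) - R k)| := by
            rw [← hz i0 hi01 hi0N1]; exact hi0
        _ ≤ ∑ k ∈ Finset.Icc 1 (N - 1), |hb k * G i0 k *
              (lam * (∑ j ∈ Finset.range (N + 1), hb j * Kc k j * z j) - R k)| :=
            Finset.abs_sum_le_sum_abs _ _
        _ ≤ ∑ k ∈ Finset.Icc 1 (N - 1),
              hb k * (Abar⁻¹ * (|lam| * (Kt * M) + Rm)) := by
            refine Finset.sum_le_sum fun k hk => ?_
            obtain ⟨hk1, hk2⟩ := Finset.mem_Icc.mp hk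
            obtain ⟨hG0, hG1⟩ := hG i0 k hi01 hi0N1 hk1 hk2
            have hbk : 0 < hb k := hbpos k (by omega)
            have hS : |∑ j ∈ Finset.range (N + 1), hb j * Kc k j * z j| ≤ Kt * M := by
              calc |∑ j ∈ Finset.range (N + 1), hb j * Kc k j * z j|
                  ≤ ∑ j ∈ Finset.range (N + 1), |hb j * Kc k j * z j| :=
                    Finset.abs_sum_le_sum_abs _ _
                _ ≤ ∑ j ∈ Finset.range (N + 1), hb j * |Kc k j| * M := by
                    refine Finset.sum_le_sum fun j hj => ?_
                    have hjN : j ≤ N := by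
                      simpa [Nat.lt_succ_iff] using Finset.mem_range.mp hj
                    have hbj := hbpos j hjN
                    have hzj := hMle j hjN
                    rw [abs_mul, abs_mul, abs_of_pos hbj]
                    have h1 : 0 ≤ hb j * |Kc k j| := by positivity
                    exact mul_le_mul_of_nonneg_left hzj h1
                _ = (∑ j ∈ Finset.range (N + 1), hb j * |Kc k j|) * M := by
                    rw [Finset.sum_mul]
                _ ≤ Kt * M := mul_le_mul_of_nonneg_right (hKtle k hk) hM0
            have hRk : |R k| ≤ Rm := Finset.le_sup' (fun k => |R k|) hk
            have habs : |lam * (∑ j ∈ Finset.range (N + 1), hb j * Kc k j * z j) - R k|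
                ≤ |lam| * (Kt * M) + Rm := by
              calc |lam * (∑ j ∈ Finset.range (N + 1), hb j * Kc k j * z j) - R k|
                  ≤ |lam * (∑ j ∈ Finset.range (N + 1), hb j * Kc k j * z j)| + |R k| :=
                    abs_sub _ _
                _ ≤ |lam| * (Kt * M) + Rm := by
                    rw [abs_mul]
                    have := mul_le_mul_of_nonneg_left hS (abs_nonneg lam)
                    linarith
            rw [abs_mul, abs_mul, abs_of_pos hbk, abs_of_nonneg hG0]
            have h2 : 0 ≤ |lam| * (Kt * M) + Rm := le_trans (abs_nonneg _) habs
            calc hb k * G i0 k *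
                |lam * (∑ j ∈ Finset.range (N + 1), hb j * Kc k j * z j) - R k|
                ≤ hb k * Abar⁻¹ * (|lam| * (Kt * M) + Rm) := by
                  have hGA : hb k * G i0 k ≤ hb k * Abar⁻¹ :=
                    mul_le_mul_of_nonneg_left hG1 hbk.le
                  have hnn : 0 ≤ hb k * G i0 k := by positivity
                  exact mul_le_mul hGA habs (abs_nonneg _) (by positivity)
              _ = hb k * (Abar⁻¹ * (|lam| * (Kt * M) + Rm)) := by ring
        _ = (∑ k ∈ Finset.Icc 1 (N - 1), hb k) *
              (Abar⁻¹ * (|lam| * (Kt * M) + Rm)) := by rw [Finset.sum_mul]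
    have hfac : 0 ≤ Abar⁻¹ * (|lam| * (Kt * M) + Rm) := by positivity
    have hstep2 : M ≤ T * (Abar⁻¹ * (|lam| * (Kt * M) + Rm)) :=
      le_trans hstep (mul_le_mul_of_nonneg_right hbsum hfac)
    calc M * Abar ≤ T * (Abar⁻¹ * (|lam| * (Kt * M) + Rm)) * Abar :=
          mul_le_mul_of_nonneg_right hstep2 hAbar.le
      _ = T * (|lam| * (Kt * M) + Rm) := by field_simp
      _ = |lam| * T * Kt * M + T * Rm := by ring
  have final : M ≤ T * Rm / (Abar - |lam| * T * Kt) := by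
    rw [le_div_iff₀ hden]
    nlinarith
  intro i hi
  exact le_trans (hMle i hi) final
end
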